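/- arXiv:2207.03650 — 10 statements merged into one kernel-verified Lean document; each statement's English description precedes it below -/
import Mathlib

section
/- Let P be a probability measure on Z and let S = (z_1,…,z_n) be drawn i.i.d. from P (i.e., S ∼ P^⊗n) with n ≥ 2. Then for any δ ∈ (0,1), with probability at least 1 − δ over the draw of S, one has R_exp(P) ≤ R_emp(S) + sqrt(2·ln(1/δ)/n). -/
/-!
Hoeffding's argument for U-statistics. Split `n` indices into `m = ⌊n/2⌋` disjoint pairs; the
mean of the `m` independent pair losses is sub-Gaussian with parameter `1/(4m)` by Hoeffding's
lemma. Averaging this block mean over all permutations of the sample gives exactly the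
U-statistic, and by convexity of `exp` an average of sub-Gaussian variables is sub-Gaussian with
the same parameter. The Chernoff bound then gives a deviation probability
`exp (-2 m t²) ≤ δ` for `t = √(2 log (1/δ) / n)`, since `4 m ≥ n`.
-/

open MeasureTheory ProbabilityTheory Real Finset
open scoped NNReal

lemma Real.exp_average_le_average_exp {ι : Type*} {s : Finset ι} (hs : s.Nonempty) (x : ι → ℝ) :
    exp ((#s : ℝ)⁻¹ * ∑ i ∈ s, x i) ≤ (#s : ℝ)⁻¹ * ∑ i ∈ s, exp (x i) := by
  have hw : ∑ _i ∈ s, (#s : ℝ)⁻¹ = 1 := by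
    rw [sum_const, nsmul_eq_mul, mul_inv_cancel₀ (by simpa using hs.ne_empty)]
  simpa [smul_eq_mul, mul_sum] using
    convexOn_exp.map_sum_le (fun _ _ => by positivity) hw (fun i _ => Set.mem_univ (x i))

namespace ProbabilityTheory

lemma HasSubgaussianMGF.average {Ω ι : Type*} [MeasurableSpace Ω] {μ : Measure Ω}
    {X : ι → Ω → ℝ} {c : ℝ≥0} {s : Finset ι} (hs : s.Nonempty)
    (h : ∀ i ∈ s, HasSubgaussianMGF (X i) c μ) :
    HasSubgaussianMGF (fun ω => (#s : ℝ)⁻¹ * ∑ i ∈ s, X i ω) c μ := by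
  have h_jensen : ∀ t ω, exp (t * ((#s : ℝ)⁻¹ * ∑ i ∈ s, X i ω)) ≤
      (#s : ℝ)⁻¹ * ∑ i ∈ s, exp (t * X i ω) := fun t ω => by
    simpa only [mul_sum, mul_left_comm t] using exp_average_le_average_exp hs (t * X · ω)
  have h_int : ∀ t, Integrable (fun ω => (#s : ℝ)⁻¹ * ∑ i ∈ s, exp (t * X i ω)) μ := fun t =>
    (integrable_finsetSum s fun i hi => (h i hi).integrable_exp_mul t).const_mul _
  have h_meas : AEMeasurable (fun ω => (#s : ℝ)⁻¹ * ∑ i ∈ s, X i ω) μ :=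
    (Finset.aemeasurable_fun_sum s fun i hi => (h i hi).aemeasurable).const_mul _
  refine ⟨fun t => (h_int t).mono' (h_meas.const_mul t).exp.aestronglyMeasurable
    (ae_of_all _ fun ω => ?_), fun t => ?_⟩
  · rw [norm_of_nonneg (exp_pos _).le]
    exact h_jensen t ω
  · calc mgf (fun ω => (#s : ℝ)⁻¹ * ∑ i ∈ s, X i ω) μ t
        ≤ ∫ ω, (#s : ℝ)⁻¹ * ∑ i ∈ s, exp (t * X i ω) ∂μ :=
          integral_mono_of_nonneg (ae_of_all _ fun _ => (exp_pos _).le) (h_int t)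
            (ae_of_all _ (h_jensen t))
      _ = (#s : ℝ)⁻¹ * ∑ i ∈ s, mgf (X i) μ t := by
          rw [integral_const_mul, integral_finsetSum s fun i hi => (h i hi).integrable_exp_mul t]
          rfl
      _ ≤ (#s : ℝ)⁻¹ * ∑ _i ∈ s, exp (c * t ^ 2 / 2) := by
          gcongr with i hi
          exact (h i hi).mgf_le t
      _ = exp (c * t ^ 2 / 2) := by
          rw [sum_const, nsmul_eq_mul, inv_mul_cancel_left₀ (by simpa using hs.ne_empty)]

lemma hasSubgaussianMGF_pi_integral_sub_average {Ω κ : Type*} [MeasurableSpace Ω] [Fintype κ]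
    (μ : Measure Ω) [IsProbabilityMeasure μ] {f : Ω → ℝ} (hf : Measurable f)
    (h0 : ∀ ω, 0 ≤ f ω) (h1 : ∀ ω, f ω ≤ 1) :
    HasSubgaussianMGF (fun x : κ → Ω => (Fintype.card κ : ℝ)⁻¹ * ∑ k, (μ[f] - f (x k)))
      (4 * Fintype.card κ)⁻¹ (Measure.pi fun _ => μ) := by
  have h_hoeffding : HasSubgaussianMGF (fun ω => μ[f] - f ω) 4⁻¹ μ := by
    convert (hasSubgaussianMGF_of_mem_Icc (μ := μ) hf.aemeasurable
      (ae_of_all _ fun ω => ⟨h0 ω, h1 ω⟩)).neg using 1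
    · ext ω; simp
    · ext; norm_num
  have h_coord : ∀ k, HasSubgaussianMGF (fun x : κ → Ω => μ[f] - f (x k)) 4⁻¹
      (Measure.pi fun _ => μ) := fun k =>
    HasSubgaussianMGF.of_map (X := fun ω => μ[f] - f ω) (measurable_pi_apply k).aemeasurable
      (by rwa [(measurePreserving_eval (fun _ => μ) k).map_eq])
  have h_indep : iIndepFun (fun k (x : κ → Ω) => μ[f] - f (x k)) (Measure.pi fun _ => μ) :=
    iIndepFun_pi (X := fun _ ω => μ[f] - f ω) fun _ => (measurable_const.sub hf).aemeasurable
  have h_mean := (HasSubgaussianMGF.sum_of_iIndepFun h_indep (s := univ)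
    fun k _ => h_coord k).const_mul (Fintype.card κ : ℝ)⁻¹
  refine ⟨h_mean.integrable_exp_mul, fun t => (h_mean.mgf_le t).trans_eq ?_⟩
  congr 1
  -- `const_mul` states its parameter as an anonymous subtype, invisible to `simp`'s `coe_mul`
  erw [NNReal.coe_mul, NNReal.coe_mk]
  push_cast
  rw [sum_const, card_univ, nsmul_eq_mul]
  obtain h | h := eq_or_ne (Fintype.card κ : ℝ) 0
  · simp [h]
  · field_simp

end ProbabilityTheory

namespace Equiv.Perm

variable {ι : Type*} [Fintype ι] [DecidableEq ι]

lemma sum_offDiag_comp (σ : Perm ι) (f : ι → ι → ℝ) :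
    ∑ i, ∑ j, (if i ≠ j then f (σ i) (σ j) else 0) = ∑ i, ∑ j, if i ≠ j then f i j else 0 :=
  Fintype.sum_equiv σ _ _ fun _ => Fintype.sum_equiv σ _ _ fun _ => by simp [σ.injective.ne_iff]

lemma card_mul_sum_apply_apply (f : ι → ι → ℝ) {a b : ι} (hab : a ≠ b) :
    (Fintype.card ι * (Fintype.card ι - 1) : ℝ) * ∑ σ : Perm ι, f (σ a) (σ b) =
      (Fintype.card ι).factorial * ∑ i, ∑ j, if i ≠ j then f i j else 0 := by
  -- By 2-transitivity the sum is the same for every distinct pair; now double count.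
  have h_pair : ∀ i j, i ≠ j → ∑ σ : Perm ι, f (σ i) (σ j) = ∑ σ : Perm ι, f (σ a) (σ b) := by
    intro i j hij
    obtain ⟨τ, hτa, hτb⟩ := MulAction.is_two_pretransitive_iff.mp
      (Equiv.Perm.isMultiplyPretransitive ι 2) hab hij
    exact Fintype.sum_equiv (Equiv.mulRight τ) _ _ fun σ => by simp [← hτa, ← hτb]
  have h_card : ∑ i : ι, ∑ j : ι, (if i ≠ j then (1 : ℝ) else 0) =
      Fintype.card ι * (Fintype.card ι - 1) := by
    have h_pos : 1 ≤ Fintype.card ι := Fintype.card_pos_iff.mpr ⟨a⟩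
    simp [Finset.sum_ite, Finset.filter_ne, Nat.cast_sub h_pos, mul_sub]
  calc (Fintype.card ι * (Fintype.card ι - 1) : ℝ) * ∑ σ : Perm ι, f (σ a) (σ b)
      = ∑ i, ∑ j, ∑ σ : Perm ι, if i ≠ j then f (σ i) (σ j) else 0 := by
        rw [← h_card, Finset.sum_mul]
        refine Finset.sum_congr rfl fun i _ => ?_
        rw [Finset.sum_mul]
        refine Finset.sum_congr rfl fun j _ => ?_
        split_ifs with hij
        · rw [one_mul, h_pair i j hij]
        · simp
    _ = ∑ σ : Perm ι, ∑ i, ∑ j, if i ≠ j then f (σ i) (σ j) else 0 := by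
        simp only [Finset.sum_comm (γ := Perm ι)]
    _ = _ := by
        simp only [sum_offDiag_comp, Finset.sum_const, Finset.card_univ, Fintype.card_perm,
          nsmul_eq_mul]

end Equiv.Perm

/-- `e` fixes `card κ` disjoint pairs of coordinates; the coordinates indexed by `ρ` are unused. -/
def pairSample {Z ι κ ρ : Type*} (e : (κ ⊕ κ) ⊕ ρ ≃ ι) (S : ι → Z) : κ → Z × Z :=
  fun k => (S (e (.inl (.inl k))), S (e (.inl (.inr k))))

lemma measurePreserving_pairSample {Z ι κ ρ : Type*} [MeasurableSpace Z] [Fintype ι]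
    [Fintype κ] [Fintype ρ] (P : Measure Z) [IsProbabilityMeasure P] (e : (κ ⊕ κ) ⊕ ρ ≃ ι) :
    MeasurePreserving (pairSample e) (Measure.pi fun _ => P) (Measure.pi fun _ => P.prod P) :=
  (measurePreserving_arrowProdEquivProdArrow Z Z κ (fun _ => P) (fun _ => P)).symm.comp
    ((measurePreserving_sumPiEquivProdPi (fun _ : κ ⊕ κ => P)).comp
    (measurePreserving_fst.comp ((measurePreserving_sumPiEquivProdPi (fun _ => P)).comp
    (measurePreserving_piCongrLeft (fun _ => P) e).symm)))

lemma average_perm_pairSample {Z ι κ ρ : Type*} [Fintype ι] [DecidableEq ι] [Fintype κ]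
    [Nonempty κ] (e : (κ ⊕ κ) ⊕ ρ ≃ ι) (R : ℝ) (g : Z → Z → ℝ) (S : ι → Z) :
    (Fintype.card (Equiv.Perm ι) : ℝ)⁻¹ * ∑ σ : Equiv.Perm ι,
        (Fintype.card κ : ℝ)⁻¹ * ∑ k, (R - Function.uncurry g (pairSample (e.trans σ) S k)) =
      R - 1 / (Fintype.card ι * (Fintype.card ι - 1)) *
        ∑ i, ∑ j, if i ≠ j then g (S i) (S j) else 0 := by
  set n := Fintype.card ι
  set D := ∑ i, ∑ j, if i ≠ j then g (S i) (S j) else 0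
  have h_ne : ∀ k : κ, e (.inl (.inl k)) ≠ e (.inl (.inr k)) := fun k h => by
    simpa using e.injective h
  have h_n : (n * (n - 1) : ℝ) ≠ 0 := by
    have : (1 : ℝ) < n := by
      exact_mod_cast Fintype.one_lt_card_iff.mpr ⟨_, _, h_ne (Classical.arbitrary κ)⟩
    nlinarith
  have h_pair : ∀ k : κ,
      ∑ σ : Equiv.Perm ι, g (S (σ (e (.inl (.inl k))))) (S (σ (e (.inl (.inr k))))) =
        n.factorial / (n * (n - 1)) * D := fun k => by
    rw [div_mul_eq_mul_div, eq_div_iff h_n, mul_comm]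
    exact Equiv.Perm.card_mul_sum_apply_apply (fun i j => g (S i) (S j)) (h_ne k)
  simp only [pairSample, Equiv.trans_apply, Function.uncurry_apply_pair, ← mul_sum]
  rw [sum_comm]
  simp only [sum_sub_distrib, h_pair, sum_const, card_univ, Fintype.card_perm, nsmul_eq_mul]
  field_simp
  ring

lemma MeasureTheory.ofReal_one_sub_le_measure {Ω : Type*} [MeasurableSpace Ω] {μ : Measure Ω}
    [IsProbabilityMeasure μ] {s : Set Ω} {δ : ℝ} (h : μ.real sᶜ ≤ δ) :
    ENNReal.ofReal (1 - δ) ≤ μ s := by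
  have hδ : 0 ≤ δ := measureReal_nonneg.trans h
  have h_compl : μ sᶜ ≤ ENNReal.ofReal δ := by
    rwa [← ofReal_measureReal, ENNReal.ofReal_le_ofReal_iff hδ]
  rw [ENNReal.ofReal_sub _ hδ, ENNReal.ofReal_one, tsub_le_iff_right]
  calc 1 = μ Set.univ := measure_univ.symm
    _ ≤ μ s + μ sᶜ := measure_univ_le_add_compl s
    _ ≤ μ s + ENNReal.ofReal δ := by gcongr

lemma hasSubgaussianMGF_integral_sub_uStatistic {Z ι : Type*} [MeasurableSpace Z] [Fintype ι]
    [DecidableEq ι] {L : Z → Z → ℝ} (hLmeas : Measurable (Function.uncurry L))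
    (hL0 : ∀ z z', 0 ≤ L z z') (hL1 : ∀ z z', L z z' ≤ 1) (P : Measure Z) [IsProbabilityMeasure P]
    (hι : 2 ≤ Fintype.card ι) :
    HasSubgaussianMGF (fun S : ι → Z => (∫ z, ∫ z', L z z' ∂P ∂P) -
        1 / (Fintype.card ι * (Fintype.card ι - 1)) *
          ∑ i, ∑ j, (if i ≠ j then L (S i) (S j) else 0))
      (4 * (Fintype.card ι / 2 : ℕ))⁻¹ (Measure.pi fun _ => P) := by
  set m := Fintype.card ι / 2
  have : Nonempty (Fin m) := ⟨⟨0, by omega⟩⟩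
  let e : (Fin m ⊕ Fin m) ⊕ Fin (Fintype.card ι - 2 * m) ≃ ι :=
    Fintype.equivOfCardEq (by simp only [Fintype.card_sum, Fintype.card_fin]; omega)
  have h_R : (P.prod P)[Function.uncurry L] = ∫ z, ∫ z', L z z' ∂P ∂P :=
    integral_prod _ (Integrable.of_mem_Icc 0 1 hLmeas.aemeasurable
      (ae_of_all _ fun p => ⟨hL0 p.1 p.2, hL1 p.1 p.2⟩))
  have h_block := hasSubgaussianMGF_pi_integral_sub_average (κ := Fin m) (P.prod P) hLmeas
    (fun p => hL0 p.1 p.2) (fun p => hL1 p.1 p.2)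
  rw [h_R, Fintype.card_fin] at h_block
  refine (HasSubgaussianMGF.average univ_nonempty fun σ _ => HasSubgaussianMGF.of_map
    (measurePreserving_pairSample P (e.trans σ)).measurable.aemeasurable
    (by rwa [(measurePreserving_pairSample P (e.trans σ)).map_eq])).congr
    (ae_of_all _ fun S => ?_)
  simpa using average_perm_pairSample e _ L S

lemma exp_neg_sq_sqrt_log_div_le {δ : ℝ} (hδ0 : 0 < δ) (hδ1 : δ < 1) {n m : ℕ} (hn : 0 < n)
    (hnm : n ≤ 4 * m) :
    exp (-√(2 * log (1 / δ) / n) ^ 2 / (2 * (4 * m : ℝ)⁻¹)) ≤ δ := by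
  have h_log : 0 < log (1 / δ) := log_pos (one_lt_one_div hδ0 hδ1)
  have h_ratio : 1 ≤ 4 * (m : ℝ) / n := by
    rw [one_le_div (by positivity)]
    exact_mod_cast hnm
  have h_exponent : -√(2 * log (1 / δ) / n) ^ 2 / (2 * (4 * m : ℝ)⁻¹) =
      -(4 * m / n) * log (1 / δ) := by
    rw [sq_sqrt (by positivity)]
    field_simp
  calc exp (-√(2 * log (1 / δ) / n) ^ 2 / (2 * (4 * m : ℝ)⁻¹)) ≤ exp (-log (1 / δ)) := by
        rw [h_exponent]
        gcongr
        nlinarith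
    _ = δ := by rw [exp_neg, exp_log (by positivity), one_div, inv_inv]

theorem stmt0_general
    {Z : Type*} [MeasurableSpace Z]
    (L : Z → Z → ℝ)
    (hLmeas : Measurable (Function.uncurry L))
    (hL0 : ∀ z z', 0 ≤ L z z') (hL1 : ∀ z z', L z z' ≤ 1)
    (P : Measure Z) [IsProbabilityMeasure P]
    (n : ℕ) (hn : 2 ≤ n)
    (δ : ℝ) (hδ0 : 0 < δ) (hδ1 : δ < 1) :
    ENNReal.ofReal (1 - δ) ≤
      Measure.pi (fun _ : Fin n => P)
        {S : Fin n → Z |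
          (∫ z, ∫ z', L z z' ∂P ∂P) ≤
            (1 / ((n : ℝ) * ((n : ℝ) - 1))) *
              ∑ i : Fin n, ∑ j : Fin n, (if i ≠ j then L (S i) (S j) else 0)
            + Real.sqrt (2 * Real.log (1 / δ) / (n : ℝ)) } := by
  have h_dev := hasSubgaussianMGF_integral_sub_uStatistic hLmeas hL0 hL1 P
    (ι := Fin n) (by simpa using hn)
  simp only [Fintype.card_fin] at h_dev
  refine ofReal_one_sub_le_measure ((measureReal_mono ?_).trans
    ((h_dev.measure_ge_le (sqrt_nonneg (2 * log (1 / δ) / n))).trans ?_))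
  · intro S hS
    simp only [Set.mem_compl_iff, Set.mem_ofPred_eq, not_le] at hS ⊢
    linarith
  · push_cast
    exact exp_neg_sq_sqrt_log_div_le hδ0 hδ1 (by omega) (by omega)

/-- For `S ~ P^⊗n` (i.i.d., `n ≥ 2`) and any `δ ∈ (0,1)`, with probability at
least `1 - δ` over the draw of `S`, we have
`R_exp(P) ≤ R_emp(S) + sqrt (2 * log (1/δ) / n)`, where
`R_emp(S) = (1/(n(n-1))) ∑_{i ≠ j} L (S i) (S j)` and
`R_exp(P) = ∫∫ L dP dP`, for a measurable symmetric loss `L` with values in `[0,1]`. -/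
theorem stmt0
    {Z : Type*} [MeasurableSpace Z]
    (L : Z → Z → ℝ)
    (hLmeas : Measurable (Function.uncurry L))
    (hL0 : ∀ z z', 0 ≤ L z z') (hL1 : ∀ z z', L z z' ≤ 1)
    (hLsym : ∀ z z', L z z' = L z' z)
    (P : Measure Z) [IsProbabilityMeasure P]
    (n : ℕ) (hn : 2 ≤ n)
    (δ : ℝ) (hδ0 : 0 < δ) (hδ1 : δ < 1) :
    ENNReal.ofReal (1 - δ) ≤
      Measure.pi (fun _ : Fin n => P)
        {S : Fin n → Z |
          (∫ z, ∫ z', L z z' ∂P ∂P) ≤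
            (1 / ((n : ℝ) * ((n : ℝ) - 1))) *
              ∑ i : Fin n, ∑ j : Fin n, (if i ≠ j then L (S i) (S j) else 0)
            + Real.sqrt (2 * Real.log (1 / δ) / (n : ℝ)) } :=
  stmt0_general L hLmeas hL0 hL1 P n hn δ hδ0 hδ1
end

section
/- Let P_target and Q be probability measures on Z, and set e = R_exp(P_target) − R_exp(Q). If S = (z_1,…,z_n) is drawn i.i.d. from Q (i.e., S ∼ Q^⊗n) with n ≥ 2, then for any δ ∈ (0,1), with probability at least 1 − δ over the draw of S, one has R_exp(P_target) ≤ R_emp(S) + e + sqrt(2·ln(1/δ)/n). -/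
/-!
Each off-diagonal pair `(S i, S j)` of an i.i.d. sample is distributed as `Q ⊗ Q`, so the
empirical AUC risk is an unbiased estimator of `R_exp(Q)`. Replacing one sample changes only the
`2 (n - 1)` pairs through it, each by at most `1`, so the empirical risk has bounded differences
`2 / n`. McDiarmid's inequality then gives `P(R_exp(Q) - R_emp(S) ≥ t) ≤ exp (-n t² / 2)`, which
is `δ` for `t = √(2 log (1/δ) / n)`; off that event
`R_exp(P_target) = R_exp(Q) + e ≤ R_emp(S) + e + t`.

McDiarmid's inequality is proved in sub-Gaussian form by induction on `n`. Writing
`g T = ∫ f (z, T) dQ(z)` for the average over the first coordinate, `f - 𝔼 f = (f - g) + (g - 𝔼 g)`: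
for fixed `T` the first term is centred with range of width `c`, hence `(c/2)²`-sub-Gaussian by
Hoeffding's lemma, and `g` again has bounded differences `c`.
-/

open MeasureTheory ProbabilityTheory Real Set
open scoped NNReal

theorem exists_forall_mem_Icc_of_abs_sub_le {α : Type*} [Nonempty α] {φ : α → ℝ} {C : ℝ}
    (h : ∀ x y, |φ x - φ y| ≤ C) : ∃ a, ∀ x, φ x ∈ Icc a (a + C) := by
  obtain ⟨x₀⟩ := ‹Nonempty α›
  have hbdd : BddBelow (range φ) := ⟨φ x₀ - C, by
    rintro _ ⟨y, rfl⟩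
    linarith [(abs_sub_le_iff.1 (h x₀ y)).1]⟩
  refine ⟨⨅ x, φ x, fun x => ⟨ciInf_le hbdd x, ?_⟩⟩
  have : φ x - C ≤ ⨅ y, φ y := le_ciInf fun y => by linarith [(abs_sub_le_iff.1 (h x y)).1]
  linarith

section Integrability

variable {α : Type*} [MeasurableSpace α] {μ : Measure α} [IsProbabilityMeasure μ]
  {φ : α → ℝ} {C : ℝ}

theorem integrable_of_forall_abs_sub_le (hφ : AEMeasurable φ μ) (h : ∀ x y, |φ x - φ y| ≤ C) :
    Integrable φ μ := by
  have := nonempty_of_isProbabilityMeasure μ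
  obtain ⟨a, ha⟩ := exists_forall_mem_Icc_of_abs_sub_le h
  exact Integrable.of_mem_Icc a (a + C) hφ (ae_of_all _ ha)

theorem integrable_exp_mul_of_forall_abs_sub_le (hφ : AEMeasurable φ μ)
    (h : ∀ x y, |φ x - φ y| ≤ C) (t : ℝ) : Integrable (fun x => exp (t * φ x)) μ := by
  have := nonempty_of_isProbabilityMeasure μ
  obtain ⟨a, ha⟩ := exists_forall_mem_Icc_of_abs_sub_le h
  exact integrable_exp_mul_of_mem_Icc hφ (ae_of_all _ ha)

end Integrability

section

variable {Z : Type*}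

section Product

variable [MeasurableSpace Z]

@[fun_prop]
theorem Measurable.finCons {α : Type*} [MeasurableSpace α] {n : ℕ} {f : α → Z}
    {g : α → Fin n → Z} (hf : Measurable f) (hg : Measurable g) :
    Measurable fun x => (Fin.cons (f x) (g x) : Fin (n + 1) → Z) := by
  rw [measurable_pi_iff]
  intro i
  induction i using Fin.cases with
  | zero => simpa using hf
  | succ j => simpa using hg.eval (a := j)

theorem integral_pi_fin_succ (μ : Measure Z) [SigmaFinite μ] {n : ℕ}
    {G : (Fin (n + 1) → Z) → ℝ} (hG : Integrable G (Measure.pi fun _ => μ)) :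
    ∫ S, G S ∂(Measure.pi fun _ => μ) =
      ∫ T, ∫ z, G (Fin.cons z T) ∂μ ∂(Measure.pi fun _ : Fin n => μ) := by
  have h := (measurePreserving_piFinSuccAbove (fun _ : Fin (n + 1) => μ) 0).symm
  rw [← h.integrable_comp_emb (MeasurableEquiv.measurableEmbedding _)] at hG
  rw [← h.integral_comp']
  have := integral_prod_symm _ hG
  simp only [Function.comp_apply] at this
  rw [this]
  simp [MeasurableEquiv.piFinSuccAbove_symm_apply, Fin.insertNthEquiv]

end Product

def HasBoundedDifferences {n : ℕ} (f : (Fin n → Z) → ℝ) (c : ℝ) : Prop :=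
  ∀ S i z, |f (Function.update S i z) - f S| ≤ c

namespace HasBoundedDifferences

variable {n : ℕ} {c : ℝ}

theorem abs_cons_sub_cons_le {f : (Fin (n + 1) → Z) → ℝ} (hf : HasBoundedDifferences f c)
    (z z' : Z) (T : Fin n → Z) : |f (Fin.cons z T) - f (Fin.cons z' T)| ≤ c := by
  simpa [Fin.update_cons_zero] using hf (Fin.cons z' T) 0 z

theorem neg {f : (Fin n → Z) → ℝ} (hf : HasBoundedDifferences f c) :
    HasBoundedDifferences (fun S => -f S) c := fun S i z => by
  rw [neg_sub_neg, abs_sub_comm]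
  exact hf S i z

theorem comp_cons {f : (Fin (n + 1) → Z) → ℝ} (hf : HasBoundedDifferences f c) (z : Z) :
    HasBoundedDifferences (fun T => f (Fin.cons z T)) c := fun T i w => by
  simpa [Fin.cons_update] using hf (Fin.cons z T) i.succ w

theorem abs_sub_le {f : (Fin n → Z) → ℝ} (hf : HasBoundedDifferences f c) (S S' : Fin n → Z) :
    |f S - f S'| ≤ n * c := by
  induction n with
  | zero => simp [Subsingleton.elim S S']
  | succ n ih =>
    have h₁ := hf.abs_cons_sub_cons_le (S 0) (S' 0) (Fin.tail S)
    have h₂ := ih (hf.comp_cons (S' 0)) (Fin.tail S) (Fin.tail S')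
    rw [Fin.cons_self_tail] at h₁
    rw [Fin.cons_self_tail] at h₂
    calc |f S - f S'| ≤ |f S - f (Fin.cons (S' 0) (Fin.tail S))| +
          |f (Fin.cons (S' 0) (Fin.tail S)) - f S'| := _root_.abs_sub_le _ _ _
      _ ≤ c + n * c := add_le_add h₁ h₂
      _ = (n + 1 : ℕ) * c := by push_cast; ring

variable [MeasurableSpace Z] (Q : Measure Z) [IsProbabilityMeasure Q]

theorem integral_cons {f : (Fin (n + 1) → Z) → ℝ} (hm : Measurable f)
    (hf : HasBoundedDifferences f c) :
    HasBoundedDifferences (fun T => ∫ z, f (Fin.cons z T) ∂Q) c := by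
  intro T i w
  have hint : ∀ T, Integrable (fun z => f (Fin.cons z T)) Q := fun T =>
    integrable_of_forall_abs_sub_le (by fun_prop) fun z z' => hf.abs_cons_sub_cons_le z z' T
  rw [← integral_sub (hint _) (hint _)]
  simpa using norm_integral_le_of_norm_le_const (μ := Q)
    (f := fun z => f (Fin.cons z (Function.update T i w)) - f (Fin.cons z T))
    (ae_of_all _ fun z => (hf.comp_cons z) T i w)

theorem hasSubgaussianMGF_sub_integral_cons {f : (Fin (n + 1) → Z) → ℝ} {c : ℝ≥0}
    (hm : Measurable f) (hf : HasBoundedDifferences f c) (T : Fin n → Z) :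
    HasSubgaussianMGF (fun z => f (Fin.cons z T) - ∫ z', f (Fin.cons z' T) ∂Q) ((c / 2) ^ 2) Q := by
  have := nonempty_of_isProbabilityMeasure Q
  obtain ⟨a, ha⟩ := exists_forall_mem_Icc_of_abs_sub_le fun z z' => hf.abs_cons_sub_cons_le z z' T
  simpa using hasSubgaussianMGF_of_mem_Icc (by fun_prop) (ae_of_all Q ha)

end HasBoundedDifferences

section McDiarmid

variable [MeasurableSpace Z] (Q : Measure Z) [IsProbabilityMeasure Q]

local notation "𝐐" => Measure.pi fun _ => Q

theorem HasBoundedDifferences.hasSubgaussianMGF_sub_integral_succ {n : ℕ}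
    {f : (Fin (n + 1) → Z) → ℝ} {c K : ℝ≥0} (hm : Measurable f) (hf : HasBoundedDifferences f c)
    (hg : HasSubgaussianMGF (fun T => ∫ z, f (Fin.cons z T) ∂Q -
      ∫ T', ∫ z, f (Fin.cons z T') ∂Q ∂𝐐) K 𝐐) :
    HasSubgaussianMGF (fun S => f S - ∫ S', f S' ∂𝐐) (K + (c / 2) ^ 2) 𝐐 := by
  set g := fun T => ∫ z, f (Fin.cons z T) ∂Q
  have hexp := integrable_exp_mul_of_forall_abs_sub_le (μ := 𝐐)
    (hm.sub_const (∫ S', f S' ∂𝐐)).aemeasurable fun S S' => by simpa using hf.abs_sub_le S S'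
  have hmean : ∫ S, f S ∂𝐐 = ∫ T, g T ∂𝐐 := integral_pi_fin_succ Q
    (integrable_of_forall_abs_sub_le hm.aemeasurable fun S S' => hf.abs_sub_le S S')
  refine ⟨hexp, fun t => ?_⟩
  calc mgf (fun S => f S - ∫ S', f S' ∂𝐐) 𝐐 t
      = ∫ T, mgf (fun z => f (Fin.cons z T) - g T) Q t * exp (t * (g T - ∫ T', g T' ∂𝐐)) ∂𝐐 := by
        rw [mgf, integral_pi_fin_succ Q (hexp t)]
        refine integral_congr_ae (ae_of_all _ fun T => ?_)
        dsimp only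
        rw [mgf, ← integral_mul_const]
        refine integral_congr_ae (ae_of_all _ fun z => ?_)
        dsimp only
        rw [hmean, ← exp_add]
        ring_nf
    _ ≤ ∫ T, exp ((c / 2) ^ 2 * t ^ 2 / 2) * exp (t * (g T - ∫ T', g T' ∂𝐐)) ∂𝐐 :=
        integral_mono_of_nonneg (ae_of_all _ fun T => mul_nonneg mgf_nonneg (exp_pos _).le)
          ((hg.integrable_exp_mul t).const_mul _) (ae_of_all _ fun T =>
            mul_le_mul_of_nonneg_right
              (by simpa using (hf.hasSubgaussianMGF_sub_integral_cons Q hm T).mgf_le t)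
              (exp_pos _).le)
    _ ≤ exp ((c / 2) ^ 2 * t ^ 2 / 2) * exp (K * t ^ 2 / 2) := by
        rw [integral_const_mul]
        gcongr
        exact hg.mgf_le t
    _ = exp ((K + (c / 2) ^ 2 : ℝ≥0) * t ^ 2 / 2) := by
        rw [← exp_add]
        push_cast
        ring_nf

theorem HasBoundedDifferences.hasSubgaussianMGF_sub_integral {n : ℕ} {f : (Fin n → Z) → ℝ}
    {c : ℝ≥0} (hm : Measurable f) (hf : HasBoundedDifferences f c) :
    HasSubgaussianMGF (fun S => f S - ∫ S', f S' ∂𝐐) (n * (c / 2) ^ 2) 𝐐 := by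
  induction n with
  | zero =>
    have hconst : ∀ S, f S - ∫ S', f S' ∂𝐐 = 0 := fun S => by simp [Subsingleton.elim _ S]
    simp [hconst]
  | succ n ih =>
    have hgm : Measurable fun T => ∫ z, f (Fin.cons z T) ∂Q :=
      (by fun_prop : Measurable fun p : Z × (Fin n → Z) => f (Fin.cons p.1 p.2))
        |>.stronglyMeasurable.integral_prod_left'.measurable
    convert hf.hasSubgaussianMGF_sub_integral_succ Q hm (ih hgm (hf.integral_cons Q hm)) using 1
    push_cast
    ring

end McDiarmid

section AUC

noncomputable def empiricalRisk (L : Z → Z → ℝ) {n : ℕ} (S : Fin n → Z) : ℝ :=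
  1 / ((n : ℝ) * ((n : ℝ) - 1)) * ∑ i : Fin n, ∑ j : Fin n, (if i ≠ j then L (S i) (S j) else 0)

theorem abs_ite_update_sub_ite_le (L : Z → Z → ℝ) (hL0 : ∀ z z', 0 ≤ L z z')
    (hL1 : ∀ z z', L z z' ≤ 1) {n : ℕ} (S : Fin n → Z) (k : Fin n) (z : Z) (i j : Fin n) :
    |(if i ≠ j then L (Function.update S k z i) (Function.update S k z j) else 0) -
        (if i ≠ j then L (S i) (S j) else 0)| ≤
      (if i = k ∧ j ≠ k then 1 else 0) + (if j = k ∧ i ≠ k then 1 else 0) := by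
  set S' := Function.update S k z
  have hL : |L (S' i) (S' j) - L (S i) (S j)| ≤ 1 := abs_sub_le_iff.2
    ⟨by linarith [hL1 (S' i) (S' j), hL0 (S i) (S j)],
      by linarith [hL0 (S' i) (S' j), hL1 (S i) (S j)]⟩
  by_cases hij : i = j
  · simp [hij]
  by_cases hi : i = k
  · subst hi
    simpa [hij, Ne.symm hij] using hL
  by_cases hj : j = k
  · subst hj
    simpa [hij, hi] using hL
  · simp [S', hij, hi, hj]

theorem hasBoundedDifferences_empiricalRisk (L : Z → Z → ℝ) (hL0 : ∀ z z', 0 ≤ L z z')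
    (hL1 : ∀ z z', L z z' ≤ 1) {n : ℕ} (hn : 2 ≤ n) :
    HasBoundedDifferences (fun S : Fin n → Z => empiricalRisk L S) (2 / n) := by
  intro S k z
  have hcount : ∑ i : Fin n, ∑ j : Fin n,
      ((if i = k ∧ j ≠ k then (1 : ℝ) else 0) + (if j = k ∧ i ≠ k then 1 else 0)) =
        2 * ((n : ℝ) - 1) := by
    simp [Finset.sum_add_distrib, ite_and, Finset.sum_ite, Finset.filter_ne',
      Nat.cast_sub (by omega : 1 ≤ n)]
    ring
  have hn1 : (0 : ℝ) < n - 1 := by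
    have : (2 : ℝ) ≤ n := by exact_mod_cast hn
    linarith
  have h2n : (2 : ℝ) / n = 1 / (n * (n - 1)) * (2 * (n - 1)) := by
    field_simp [hn1.ne']
  unfold empiricalRisk
  rw [h2n, ← hcount, ← mul_sub, ← Finset.sum_sub_distrib, abs_mul, abs_of_pos (by positivity)]
  gcongr
  simp_rw [← Finset.sum_sub_distrib]
  refine (Finset.abs_sum_le_sum_abs _ _).trans (Finset.sum_le_sum fun i _ => ?_)
  exact (Finset.abs_sum_le_sum_abs _ _).trans
    (Finset.sum_le_sum fun j _ => abs_ite_update_sub_ite_le L hL0 hL1 S k z i j)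

variable [MeasurableSpace Z]

noncomputable def expectedRisk (L : Z → Z → ℝ) (P : Measure Z) : ℝ :=
  ∫ z, ∫ z', L z z' ∂P ∂P

theorem map_pi_pair_eq_prod (Q : Measure Z) [IsProbabilityMeasure Q] {n : ℕ} {i j : Fin n}
    (hij : i ≠ j) :
    (Measure.pi fun _ : Fin n => Q).map (fun S => (S i, S j)) = Q.prod Q := by
  have hindep : IndepFun (fun S : Fin n → Z => S i) (fun S => S j) (Measure.pi fun _ => Q) :=
    (iIndepFun_pi (μ := fun _ : Fin n => Q) (X := fun _ => id) fun _ => aemeasurable_id).indepFun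
      hij
  rw [indepFun_iff_map_prod_eq_prod_map_map (measurable_pi_apply i).aemeasurable
    (measurable_pi_apply j).aemeasurable] at hindep
  simpa [(measurePreserving_eval _ i).map_eq, (measurePreserving_eval _ j).map_eq] using hindep

theorem integral_empiricalRisk (L : Z → Z → ℝ) (Q : Measure Z) [IsProbabilityMeasure Q]
    (hL : Integrable (Function.uncurry L) (Q.prod Q)) {n : ℕ} (hn : 2 ≤ n) :
    ∫ S, empiricalRisk L S ∂(Measure.pi fun _ : Fin n => Q) = expectedRisk L Q := by
  set P := Measure.pi fun _ : Fin n => Q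
  set R := expectedRisk L Q
  have hpair : ∀ i j : Fin n, i ≠ j →
      Integrable (fun S => L (S i) (S j)) P ∧ ∫ S, L (S i) (S j) ∂P = R := by
    intro i j hij
    have hφ : AEMeasurable (fun S : Fin n → Z => (S i, S j)) P := by fun_prop
    have hL' : Integrable (Function.uncurry L) (P.map fun S => (S i, S j)) := by
      rwa [map_pi_pair_eq_prod Q hij]
    refine ⟨(integrable_map_measure hL'.aestronglyMeasurable hφ).1 hL', ?_⟩
    change ∫ S, Function.uncurry L (S i, S j) ∂P = R
    rw [← integral_map hφ hL'.aestronglyMeasurable, map_pi_pair_eq_prod Q hij,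
      integral_prod _ hL]
    rfl
  have hterm : ∀ i j : Fin n, Integrable (fun S => if i ≠ j then L (S i) (S j) else 0) P ∧
      ∫ S, (if i ≠ j then L (S i) (S j) else 0) ∂P = if i ≠ j then R else 0 := by
    intro i j
    split_ifs with hij
    · exact hpair i j hij
    · simp
  have hn1 : (n : ℝ) - 1 ≠ 0 := by
    have : (2 : ℝ) ≤ n := by exact_mod_cast hn
    linarith
  unfold empiricalRisk
  rw [integral_const_mul, integral_finsetSum _ fun i _ =>
    integrable_finsetSum _ fun j _ => (hterm i j).1]
  simp_rw [integral_finsetSum _ fun j _ => (hterm _ j).1, fun i j => (hterm i j).2]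
  simp [Finset.sum_ite, Finset.filter_ne, Nat.cast_sub (by omega : 1 ≤ n)]
  field_simp

theorem measurable_empiricalRisk {L : Z → Z → ℝ} (hL : Measurable (Function.uncurry L)) {n : ℕ} :
    Measurable fun S : Fin n → Z => empiricalRisk L S := by
  refine (Finset.measurable_sum _ fun i _ => Finset.measurable_sum _ fun j _ => ?_).const_mul _
  split_ifs
  · exact hL.comp (f := fun S : Fin n → Z => (S i, S j)) (by fun_prop)
  · exact measurable_const

theorem measureReal_le_expectedRisk_sub_empiricalRisk_le {L : Z → Z → ℝ}
    (hLm : Measurable (Function.uncurry L)) (hL0 : ∀ z z', 0 ≤ L z z') (hL1 : ∀ z z', L z z' ≤ 1)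
    (Q : Measure Z) [IsProbabilityMeasure Q] {n : ℕ} (hn : 2 ≤ n) {t : ℝ} (ht : 0 ≤ t) :
    (Measure.pi fun _ : Fin n => Q).real {S | t ≤ expectedRisk L Q - empiricalRisk L S} ≤
      exp (-(n * t ^ 2 / 2)) := by
  have hn0 : (0 : ℝ) < n := by positivity
  have hR : HasBoundedDifferences (fun S : Fin n → Z => -empiricalRisk L S) (2 / n : ℝ≥0) := by
    simpa using (hasBoundedDifferences_empiricalRisk L hL0 hL1 hn).neg
  have hLint : Integrable (Function.uncurry L) (Q.prod Q) :=
    Integrable.of_mem_Icc 0 1 hLm.aemeasurable (ae_of_all _ fun p => ⟨hL0 _ _, hL1 _ _⟩)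
  have h :=
    (hR.hasSubgaussianMGF_sub_integral Q (measurable_empiricalRisk hLm).neg).measure_ge_le ht
  simp only [Pi.neg_apply, integral_neg, integral_empiricalRisk L Q hLint hn, sub_neg_eq_add,
    neg_add_eq_sub] at h
  refine h.trans_eq ?_
  push_cast
  field_simp

end AUC

end

theorem ofReal_one_sub_le_of_measure_compl_le {α : Type*} [MeasurableSpace α] {μ : Measure α}
    [IsProbabilityMeasure μ] {s : Set α} {δ : ℝ} (hδ : 0 ≤ δ) (h : μ sᶜ ≤ ENNReal.ofReal δ) :
    ENNReal.ofReal (1 - δ) ≤ μ s := by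
  rw [ENNReal.ofReal_sub 1 hδ, ENNReal.ofReal_one, tsub_le_iff_right, ← measure_univ (μ := μ)]
  exact (measure_univ_le_add_compl s).trans (by gcongr)

theorem stmt2_general
    {Z : Type*} [MeasurableSpace Z]
    (L : Z → Z → ℝ)
    (hLmeas : Measurable (Function.uncurry L))
    (hL0 : ∀ z z', 0 ≤ L z z') (hL1 : ∀ z z', L z z' ≤ 1)
    (Ptarget Q : Measure Z) [IsProbabilityMeasure Q]
    (e : ℝ)
    (he : e = (∫ z, ∫ z', L z z' ∂Ptarget ∂Ptarget) - ∫ z, ∫ z', L z z' ∂Q ∂Q)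
    (n : ℕ) (hn : 2 ≤ n)
    (δ : ℝ) (hδ0 : 0 < δ) (hδ1 : δ < 1) :
    ENNReal.ofReal (1 - δ) ≤
      Measure.pi (fun _ : Fin n => Q)
        {S : Fin n → Z |
          (∫ z, ∫ z', L z z' ∂Ptarget ∂Ptarget) ≤
            (1 / ((n : ℝ) * ((n : ℝ) - 1))) *
              ∑ i : Fin n, ∑ j : Fin n, (if i ≠ j then L (S i) (S j) else 0)
            + e + Real.sqrt (2 * Real.log (1 / δ) / (n : ℝ)) } := by
  set t := Real.sqrt (2 * Real.log (1 / δ) / n)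
  have hδ : exp (-(n * t ^ 2 / 2)) = δ := by
    have hn0 : (0 : ℝ) < n := by positivity
    rw [sq_sqrt (by have := Real.log_nonneg (one_le_one_div hδ0 hδ1.le); positivity), one_div,
      Real.log_inv]
    field_simp
    exact exp_log hδ0
  have htail : Measure.pi (fun _ : Fin n => Q)
      {S | t ≤ expectedRisk L Q - empiricalRisk L S} ≤ ENNReal.ofReal δ := by
    rw [← ofReal_measureReal, ← hδ]
    exact ENNReal.ofReal_le_ofReal
      (measureReal_le_expectedRisk_sub_empiricalRisk_le hLmeas hL0 hL1 Q hn (sqrt_nonneg _))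
  refine ofReal_one_sub_le_of_measure_compl_le hδ0.le ((measure_mono fun S hS => ?_).trans htail)
  simp only [mem_compl_iff, mem_ofPred_eq, not_le, expectedRisk] at hS ⊢
  change empiricalRisk L S + e + t < _ at hS
  linarith

/-- Let `P_target` and `Q` be probability measures on `Z` and
`e = R_exp(P_target) - R_exp(Q)`. If `S ~ Q^⊗n` (i.i.d., `n ≥ 2`), then for any `δ ∈ (0,1)`,
with probability at least `1 - δ` over the draw of `S`,
`R_exp(P_target) ≤ R_emp(S) + e + sqrt (2 * log (1/δ) / n)`. -/
theorem stmt2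
    {Z : Type*} [MeasurableSpace Z]
    (L : Z → Z → ℝ)
    (hLmeas : Measurable (Function.uncurry L))
    (hL0 : ∀ z z', 0 ≤ L z z') (hL1 : ∀ z z', L z z' ≤ 1)
    (hLsym : ∀ z z', L z z' = L z' z)
    (Ptarget Q : Measure Z) [IsProbabilityMeasure Ptarget] [IsProbabilityMeasure Q]
    (e : ℝ)
    (he : e = (∫ z, ∫ z', L z z' ∂Ptarget ∂Ptarget) - ∫ z, ∫ z', L z z' ∂Q ∂Q)
    (n : ℕ) (hn : 2 ≤ n)
    (δ : ℝ) (hδ0 : 0 < δ) (hδ1 : δ < 1) :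
    ENNReal.ofReal (1 - δ) ≤
      Measure.pi (fun _ : Fin n => Q)
        {S : Fin n → Z |
          (∫ z, ∫ z', L z z' ∂Ptarget ∂Ptarget) ≤
            (1 / ((n : ℝ) * ((n : ℝ) - 1))) *
              ∑ i : Fin n, ∑ j : Fin n, (if i ≠ j then L (S i) (S j) else 0)
            + e + Real.sqrt (2 * Real.log (1 / δ) / (n : ℝ)) } :=
  stmt2_general L hLmeas hL0 hL1 Ptarget Q e he n hn δ hδ0 hδ1
end

section
/- If μ < (1/(4nm)) Σ_{i=1}^n Σ_{j=1}^m ξ_{ij}, then the function K is not convex on the set [0,1]^n × [0,1]^m. In particular, for fixed model parameters the sub-problem of the balanced self-paced AUC objective with respect to all weight variables (v,u) may be non-convex. -/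
/-!
Along the segment from `(0, 1)` to `(1, 0)` in `[0,1]^n × [0,1]^m`, through constant vectors,
the bilinear term contributes `t (1 - t) S / (nm)` (with `S = ∑ ξ i j`) and the penalty
`μ (2t - 1)²`, so the midpoint value `S / (4nm) - λ` exceeds the common endpoint value
`μ - λ` exactly when `μ < S / (4nm)`, violating convexity.
-/

open Finset

noncomputable section

def selfPacedObjective (n m : ℕ) (ξ : Fin n → Fin m → ℝ) (lam μ : ℝ)
    (p : (Fin n → ℝ) × (Fin m → ℝ)) : ℝ :=
  (1 / ((n : ℝ) * (m : ℝ))) * ∑ i : Fin n, ∑ j : Fin m, p.1 i * p.2 j * ξ i j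
    - lam * ((1 / (n : ℝ)) * ∑ i : Fin n, p.1 i + (1 / (m : ℝ)) * ∑ j : Fin m, p.2 j)
    + μ * ((1 / (n : ℝ)) * ∑ i : Fin n, p.1 i - (1 / (m : ℝ)) * ∑ j : Fin m, p.2 j) ^ 2

theorem selfPacedObjective_const {n m : ℕ} (hn : n ≠ 0) (hm : m ≠ 0)
    (ξ : Fin n → Fin m → ℝ) (lam μ a b : ℝ) :
    selfPacedObjective n m ξ lam μ (fun _ => a, fun _ => b) =
      a * b / (n * m) * ∑ i, ∑ j, ξ i j - lam * (a + b) + μ * (a - b) ^ 2 := by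
  have hn' : (n : ℝ) ≠ 0 := Nat.cast_ne_zero.mpr hn
  have hm' : (m : ℝ) ≠ 0 := Nat.cast_ne_zero.mpr hm
  have hbilin : ∑ i : Fin n, ∑ j : Fin m, a * b * ξ i j = a * b * ∑ i, ∑ j, ξ i j := by
    simp only [mul_sum]
  simp only [selfPacedObjective, hbilin, sum_const, card_univ, Fintype.card_fin, nsmul_eq_mul]
  field_simp

theorem not_convexOn_selfPacedObjective {n m : ℕ} (hn : n ≠ 0) (hm : m ≠ 0)
    (ξ : Fin n → Fin m → ℝ) (lam μ : ℝ)
    (hlt : μ < 1 / (4 * n * m) * ∑ i, ∑ j, ξ i j) :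
    ¬ ConvexOn ℝ (Set.Icc (0 : Fin n → ℝ) 1 ×ˢ Set.Icc (0 : Fin m → ℝ) 1)
      (selfPacedObjective n m ξ lam μ) := by
  intro hconv
  have hx : ((fun _ => 0, fun _ => 1) : (Fin n → ℝ) × (Fin m → ℝ)) ∈
      Set.Icc (0 : Fin n → ℝ) 1 ×ˢ Set.Icc (0 : Fin m → ℝ) 1 :=
    ⟨⟨le_rfl, fun _ => zero_le_one⟩, ⟨fun _ => zero_le_one, le_rfl⟩⟩
  have hy : ((fun _ => 1, fun _ => 0) : (Fin n → ℝ) × (Fin m → ℝ)) ∈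
      Set.Icc (0 : Fin n → ℝ) 1 ×ˢ Set.Icc (0 : Fin m → ℝ) 1 :=
    ⟨⟨fun _ => zero_le_one, le_rfl⟩, ⟨le_rfl, fun _ => zero_le_one⟩⟩
  have hmid := hconv.2 hx hy (by norm_num : (0 : ℝ) ≤ 1 / 2) (by norm_num : (0 : ℝ) ≤ 1 / 2)
    (by norm_num)
  have hcombo : (1 / 2 : ℝ) • ((fun _ => 0, fun _ => 1) : (Fin n → ℝ) × (Fin m → ℝ)) +
      (1 / 2 : ℝ) • (fun _ => 1, fun _ => 0) = (fun _ => 1 / 2, fun _ => 1 / 2) := by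
    ext <;> simp
  rw [hcombo] at hmid
  simp only [selfPacedObjective_const hn hm, smul_eq_mul, zero_mul, mul_zero, zero_div] at hmid
  have hquarter : 1 / 2 * (1 / 2) / (n * m) * ∑ i, ∑ j, ξ i j =
      1 / (4 * n * m) * ∑ i, ∑ j, ξ i j := by
    ring
  linarith

theorem stmt4_general
    (n m : ℕ) (hn : 1 ≤ n) (hm : 1 ≤ m)
    (ξ : Fin n → Fin m → ℝ)
    (lam μ : ℝ)
    (hlt : μ < (1 / (4 * (n : ℝ) * (m : ℝ))) * ∑ i : Fin n, ∑ j : Fin m, ξ i j) :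
    ¬ ConvexOn ℝ ((Set.Icc (0 : Fin n → ℝ) 1) ×ˢ (Set.Icc (0 : Fin m → ℝ) 1))
      (fun p : (Fin n → ℝ) × (Fin m → ℝ) =>
        (1 / ((n : ℝ) * (m : ℝ))) * ∑ i : Fin n, ∑ j : Fin m, p.1 i * p.2 j * ξ i j
          - lam * ((1 / (n : ℝ)) * ∑ i : Fin n, p.1 i
              + (1 / (m : ℝ)) * ∑ j : Fin m, p.2 j)
          + μ * ((1 / (n : ℝ)) * ∑ i : Fin n, p.1 i
              - (1 / (m : ℝ)) * ∑ j : Fin m, p.2 j) ^ 2) :=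
  not_convexOn_selfPacedObjective (Nat.one_le_iff_ne_zero.mp hn)
    (Nat.one_le_iff_ne_zero.mp hm) ξ lam μ hlt

/-- If `μ < (1/(4nm)) ∑_{i,j} ξ i j`, then the balanced self-paced AUC
sub-problem objective `K(v,u)` (with fixed model parameters) is not convex on
`[0,1]^n × [0,1]^m`. -/
theorem stmt4
    (n m : ℕ) (hn : 1 ≤ n) (hm : 1 ≤ m)
    (ξ : Fin n → Fin m → ℝ) (hξ : ∀ i j, 0 ≤ ξ i j)
    (lam μ : ℝ) (hlam : 0 < lam) (hμ : 0 < μ)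
    (hlt : μ < (1 / (4 * (n : ℝ) * (m : ℝ))) * ∑ i : Fin n, ∑ j : Fin m, ξ i j) :
    ¬ ConvexOn ℝ ((Set.Icc (0 : Fin n → ℝ) 1) ×ˢ (Set.Icc (0 : Fin m → ℝ) 1))
      (fun p : (Fin n → ℝ) × (Fin m → ℝ) =>
        (1 / ((n : ℝ) * (m : ℝ))) * ∑ i : Fin n, ∑ j : Fin m, p.1 i * p.2 j * ξ i j
          - lam * ((1 / (n : ℝ)) * ∑ i : Fin n, p.1 i
              + (1 / (m : ℝ)) * ∑ j : Fin m, p.2 j)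
          + μ * ((1 / (n : ℝ)) * ∑ i : Fin n, p.1 i
              - (1 / (m : ℝ)) * ∑ j : Fin m, p.2 j) ^ 2) :=
  stmt4_general n m hn hm ξ lam μ hlt

end
end

section
/- Define v* ∈ ℝ^n coordinatewise by: v*_p = 1 if l_p < λ − 2μ(p/n − Q); v*_p = 0 if l_p > λ − 2μ((p−1)/n − Q); and v*_p = n(Q − (l_p − λ)/(2μ) − (p−1)/n) if λ − 2μ(p/n − Q) ≤ l_p ≤ λ − 2μ((p−1)/n − Q). Then v* ∈ [0,1]^n and v* is a global minimizer of G over [0,1]^n. -/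
open Finset


lemma clamp_mono' {x y : ℝ} (h : x ≤ y) : max 0 (min x 1) ≤ max 0 (min y 1) :=
  max_le_max le_rfl (min_le_min h le_rfl)

lemma clamp_nonneg' (x : ℝ) : 0 ≤ max 0 (min x 1) := le_max_left _ _

lemma clamp_le_one' (x : ℝ) : max 0 (min x 1) ≤ 1 :=
  max_le zero_le_one (min_le_right _ _)

lemma clamp_eq_min_sub' (τ x : ℝ) :
    max 0 (min (τ - x) 1) = min τ (x + 1) - min τ x := by
  simp only [min_def, max_def]
  split_ifs <;> linarith

lemma tele' (n : ℕ) (τ : ℝ) :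
    ∑ p : Fin n, (min τ (((p:ℕ):ℝ) + 1) - min τ ((p:ℕ):ℝ)) = min τ (n:ℝ) - min τ 0 := by
  rw [Fin.sum_univ_eq_sum_range (fun i => min τ ((i:ℝ) + 1) - min τ (i:ℝ))]
  have h := Finset.sum_range_sub (fun i : ℕ => min τ ((i:ℕ):ℝ)) n
  simp only [Nat.cast_zero] at h
  rw [← h]
  apply Finset.sum_congr rfl
  intro i _
  push_cast
  ring_nf



/-- closed-form solution of the `v`-subproblem. With losses
`l p = (1/m) ∑_j u_j ξ_{pj}` sorted nondecreasingly and `Q = (1/m) ∑_j u_j`, the vector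
`v*` defined coordinatewise by the threshold rule (here the coordinate `p : Fin n`
corresponds to the `(p+1)`-st sample, so `p/n` in the paper is `((p:ℕ)+1)/n` and
`(p−1)/n` is `(p:ℕ)/n`) lies in `[0,1]^n` and is a global minimizer of
`G(v) = (1/n)∑ v_i l_i − (λ/n)∑ v_i + μ((1/n)∑ v_i − Q)²` over `[0,1]^n`. -/
theorem stmt6
    (n m : ℕ) (hn : 1 ≤ n) (hm : 1 ≤ m)
    (ξ : Fin n → Fin m → ℝ) (hξ : ∀ i j, 0 ≤ ξ i j)
    (lam μ : ℝ) (hlam : 0 < lam) (hμ : 0 < μ)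
    (u : Fin m → ℝ) (hu : u ∈ Set.Icc (0 : Fin m → ℝ) 1)
    (Q : ℝ) (hQ : Q = (1 / (m : ℝ)) * ∑ j : Fin m, u j)
    (l : Fin n → ℝ) (hl : ∀ p, l p = (1 / (m : ℝ)) * ∑ j : Fin m, u j * ξ p j)
    (hsorted : Monotone l)
    (G : (Fin n → ℝ) → ℝ)
    (hG : ∀ v, G v = (1 / (n : ℝ)) * ∑ i : Fin n, v i * l i
      - (lam / (n : ℝ)) * ∑ i : Fin n, v i
      + μ * ((1 / (n : ℝ)) * ∑ i : Fin n, v i - Q) ^ 2)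
    (vstar : Fin n → ℝ)
    (hvstar : ∀ p : Fin n, vstar p =
      if l p < lam - 2 * μ * ((((p : ℕ) : ℝ) + 1) / (n : ℝ) - Q) then 1
      else if lam - 2 * μ * (((p : ℕ) : ℝ) / (n : ℝ) - Q) < l p then 0
      else (n : ℝ) * (Q - (l p - lam) / (2 * μ) - ((p : ℕ) : ℝ) / (n : ℝ))) :
    vstar ∈ Set.Icc (0 : Fin n → ℝ) 1 ∧
      ∀ v ∈ Set.Icc (0 : Fin n → ℝ) 1, G vstar ≤ G v := by
  have hn0 : (0:ℝ) < n := by exact_mod_cast Nat.lt_of_lt_of_le Nat.zero_lt_one hn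
  have hne : (n:ℝ) ≠ 0 := ne_of_gt hn0
  have hμ2 : (0:ℝ) < 2*μ := by linarith
  set c : ℝ := lam + 2*μ*Q with hcdef
  set φ : Fin n → ℝ := fun p => (n:ℝ)*(c - l p)/(2*μ) - ((p:ℕ):ℝ) with hφdef
  have hφmul : ∀ p : Fin n, (2*μ)*(φ p) = (n:ℝ)*(c - l p) - 2*μ*((p:ℕ):ℝ) := by
    intro p
    rw [hφdef]
    field_simp
  -- rewrite vstar as a clamp
  have hv : ∀ p, vstar p = max 0 (min (φ p) 1) := by
    intro p
    have e4 : (n:ℝ)*(c - l p) = (n:ℝ)*c - (n:ℝ)*(l p) := by ring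
    have e1 : (n:ℝ) * (lam - 2*μ*((((p:ℕ):ℝ)+1)/(n:ℝ) - Q))
        = (n:ℝ)*c - 2*μ*(((p:ℕ):ℝ)+1) := by
      rw [hcdef]; field_simp; ring
    have e2 : (n:ℝ) * (lam - 2*μ*(((p:ℕ):ℝ)/(n:ℝ) - Q))
        = (n:ℝ)*c - 2*μ*((p:ℕ):ℝ) := by
      rw [hcdef]; field_simp; ring
    have hiff1 : (l p < lam - 2*μ*((((p:ℕ):ℝ)+1)/(n:ℝ) - Q)) ↔ 1 < φ p := by
      rw [show (l p < lam - 2*μ*((((p:ℕ):ℝ)+1)/(n:ℝ) - Q)) ↔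
          ((n:ℝ)*(l p) < (n:ℝ)*(lam - 2*μ*((((p:ℕ):ℝ)+1)/(n:ℝ) - Q))) from
          (mul_lt_mul_iff_right₀ hn0).symm, e1,
        show (1 < φ p) ↔ ((2*μ)*1 < (2*μ)*(φ p)) from (mul_lt_mul_iff_right₀ hμ2).symm,
        hφmul p]
      constructor <;> intro h <;> linarith [e4]
    have hiff2 : (lam - 2*μ*(((p:ℕ):ℝ)/(n:ℝ) - Q) < l p) ↔ φ p < 0 := by
      rw [show (lam - 2*μ*(((p:ℕ):ℝ)/(n:ℝ) - Q) < l p) ↔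
          ((n:ℝ)*(lam - 2*μ*(((p:ℕ):ℝ)/(n:ℝ) - Q)) < (n:ℝ)*(l p)) from
          (mul_lt_mul_iff_right₀ hn0).symm, e2,
        show (φ p < 0) ↔ ((2*μ)*(φ p) < (2*μ)*0) from (mul_lt_mul_iff_right₀ hμ2).symm,
        hφmul p]
      constructor <;> intro h <;> linarith [e4]
    have e5 : (n:ℝ)*(Q - (l p - lam)/(2*μ) - ((p:ℕ):ℝ)/(n:ℝ)) = φ p := by
      rw [hφdef, hcdef]; field_simp; ring
    rw [hvstar p]
    split_ifs with h1 h2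
    · have h1' := hiff1.mp h1
      rw [min_eq_right h1'.le, max_eq_right zero_le_one]
    · have h2' := hiff2.mp h2
      rw [min_eq_left (by linarith : φ p ≤ 1), max_eq_left h2'.le]
    · have h1' : ¬ (1 < φ p) := fun hx => h1 (hiff1.mpr hx)
      have h2' : ¬ (φ p < 0) := fun hx => h2 (hiff2.mpr hx)
      push_neg at h1' h2'
      rw [e5, min_eq_left h1', max_eq_right h2']
  set S : ℝ := ∑ p : Fin n, vstar p with hSdef
  have hS : S = ∑ p : Fin n, max 0 (min (φ p) 1) := by
    rw [hSdef]; exact Finset.sum_congr rfl fun p _ => hv p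
  -- monotonicity of shifted φ
  have hmono : ∀ k p : Fin n, k ≤ p → φ p + ((p:ℕ):ℝ) ≤ φ k + ((k:ℕ):ℝ) := by
    intro k p hkp
    have hl : l k ≤ l p := hsorted hkp
    have h1 : ∀ q : Fin n, φ q + ((q:ℕ):ℝ) = (n:ℝ)*(c - l q)/(2*μ) := by
      intro q; rw [hφdef]; ring
    rw [h1 k, h1 p]
    gcongr
  -- upper bound on S
  have sumUB : ∀ k : Fin n, 0 < φ k → S ≤ φ k + ((k:ℕ):ℝ) := by
    intro k hk
    set τ : ℝ := φ k + ((k:ℕ):ℝ) with hτdef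
    have hτ0 : 0 < τ := by
      have : (0:ℝ) ≤ ((k:ℕ):ℝ) := Nat.cast_nonneg _
      rw [hτdef]; linarith
    rw [hS]
    calc ∑ p : Fin n, max 0 (min (φ p) 1)
        ≤ ∑ p : Fin n, (min τ (((p:ℕ):ℝ) + 1) - min τ ((p:ℕ):ℝ)) := by
          apply Finset.sum_le_sum
          intro p _
          rw [← clamp_eq_min_sub']
          rcases le_or_gt k p with hkp | hpk
          · apply clamp_mono'
            have := hmono k p hkp
            rw [hτdef]; linarith
          · have hpk' : ((p:ℕ):ℝ) + 1 ≤ ((k:ℕ):ℝ) := by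
              have := Fin.lt_def.mp hpk
              exact_mod_cast Nat.succ_le_of_lt this
            have h1 : (1:ℝ) ≤ τ - ((p:ℕ):ℝ) := by rw [hτdef]; linarith
            calc max 0 (min (φ p) 1) ≤ 1 := clamp_le_one' _
              _ = max 0 (min (τ - ((p:ℕ):ℝ)) 1) := by
                  rw [min_eq_right h1, max_eq_right zero_le_one]
      _ = min τ (n:ℝ) - min τ 0 := tele' n τ
      _ ≤ τ := by
          have h1 : min τ (n:ℝ) ≤ τ := min_le_left _ _
          have h2 : min τ 0 = 0 := min_eq_right hτ0.le
          linarith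
  -- lower bound on S
  have sumLB : ∀ k : Fin n, φ k < 1 → φ k + ((k:ℕ):ℝ) ≤ S := by
    intro k hk
    set τ : ℝ := φ k + ((k:ℕ):ℝ) with hτdef
    have hkn : ((k:ℕ):ℝ) + 1 ≤ (n:ℝ) := by exact_mod_cast Nat.succ_le_of_lt k.isLt
    have hτn : τ ≤ (n:ℝ) := by rw [hτdef]; linarith
    rw [hS]
    calc τ ≤ min τ (n:ℝ) - min τ 0 := by
          rw [min_eq_left hτn]
          have := min_le_right τ 0
          linarith
      _ = ∑ p : Fin n, (min τ (((p:ℕ):ℝ) + 1) - min τ ((p:ℕ):ℝ)) := (tele' n τ).symm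
      _ ≤ ∑ p : Fin n, max 0 (min (φ p) 1) := by
          apply Finset.sum_le_sum
          intro p _
          rw [← clamp_eq_min_sub']
          rcases le_or_gt p k with hpk | hkp
          · apply clamp_mono'
            have := hmono p k hpk
            rw [hτdef]; linarith
          · have hkp' : ((k:ℕ):ℝ) + 1 ≤ ((p:ℕ):ℝ) := by
              have := Fin.lt_def.mp hkp
              exact_mod_cast Nat.succ_le_of_lt this
            have h0 : τ - ((p:ℕ):ℝ) ≤ 0 := by rw [hτdef]; linarith
            calc max 0 (min (τ - ((p:ℕ):ℝ)) 1) = 0 := by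
                  rw [min_eq_left (by linarith : τ - ((p:ℕ):ℝ) ≤ 1), max_eq_left h0]
              _ ≤ max 0 (min (φ p) 1) := clamp_nonneg' _
  -- complementarity
  have hcomp : ∀ k : Fin n, ∀ vk : ℝ, 0 ≤ vk → vk ≤ 1 →
      0 ≤ (vk - vstar k) * (l k - lam + 2*μ*(S/(n:ℝ) - Q)) := by
    intro k vk hvk0 hvk1
    set g : ℝ := l k - lam + 2*μ*(S/(n:ℝ) - Q) with hgdef
    have e6 : (2*μ)*(φ k + ((k:ℕ):ℝ)) = (n:ℝ)*(c - l k) := by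
      rw [mul_add, hφmul k]; ring
    have hgn : (n:ℝ) * g = 2*μ*S - (2*μ)*(φ k + ((k:ℕ):ℝ)) := by
      rw [hgdef, e6, hcdef]; field_simp; ring
    rcases lt_trichotomy g 0 with hneg | hzero | hpos
    · have hng : (n:ℝ) * g < 0 := mul_neg_of_pos_of_neg hn0 hneg
      have hSlt : (2:ℝ)*μ*S < (2*μ)*(φ k + ((k:ℕ):ℝ)) := by linarith [hgn]
      have hSlt' : S < φ k + ((k:ℕ):ℝ) := by
        have := (mul_lt_mul_iff_right₀ hμ2).mp (by linarith : (2*μ)*S < (2*μ)*(φ k + ((k:ℕ):ℝ)))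
        exact this
      have hφ1 : (1:ℝ) ≤ φ k := by
        by_contra hx
        push_neg at hx
        exact absurd (sumLB k hx) (by linarith)
      have hv1 : vstar k = 1 := by
        rw [hv k, min_eq_right hφ1, max_eq_right zero_le_one]
      rw [hv1]
      nlinarith [mul_nonneg (by linarith : (0:ℝ) ≤ 1 - vk) (by linarith : (0:ℝ) ≤ -g)]
    · rw [hzero, mul_zero]
    · have hng : (0:ℝ) < (n:ℝ) * g := mul_pos hn0 hpos
      have hSgt : (2*μ)*(φ k + ((k:ℕ):ℝ)) < (2*μ)*S := by linarith [hgn]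
      have hSgt' : φ k + ((k:ℕ):ℝ) < S := (mul_lt_mul_iff_right₀ hμ2).mp hSgt
      have hφ0 : φ k ≤ 0 := by
        by_contra hx
        push_neg at hx
        exact absurd (sumUB k hx) (by linarith)
      have hv0 : vstar k = 0 := by
        rw [hv k, min_eq_left (by linarith : φ k ≤ 1), max_eq_left hφ0]
      rw [hv0, sub_zero]
      exact mul_nonneg hvk0 hpos.le
  constructor
  · rw [Set.mem_Icc]
    constructor
    · rw [Pi.le_def]
      intro p
      simpa [hv p] using clamp_nonneg' (φ p)
    · rw [Pi.le_def]
      intro p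
      simpa [hv p] using clamp_le_one' (φ p)
  · intro v hvmem
    rw [Set.mem_Icc] at hvmem
    obtain ⟨hv0, hv1⟩ := hvmem
    have hv0' : ∀ p, 0 ≤ v p := fun p => by simpa using hv0 p
    have hv1' : ∀ p, v p ≤ 1 := fun p => by simpa using hv1 p
    have hexp : ∑ p : Fin n, (v p - vstar p) * (l p - lam + 2*μ*(S/(n:ℝ) - Q))
        = (∑ p : Fin n, v p * l p) - (∑ p : Fin n, vstar p * l p)
          + ((- lam + 2*μ*(S/(n:ℝ) - Q)) * (∑ p : Fin n, v p)
            - (- lam + 2*μ*(S/(n:ℝ) - Q)) * S) := by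
      rw [hSdef, Finset.mul_sum, Finset.mul_sum, ← Finset.sum_sub_distrib,
        ← Finset.sum_sub_distrib, ← Finset.sum_add_distrib]
      exact Finset.sum_congr rfl fun p _ => by ring
    have hdiff : G v - G vstar
        = (1/(n:ℝ)) * ∑ p : Fin n, (v p - vstar p) * (l p - lam + 2*μ*(S/(n:ℝ) - Q))
          + μ * ((∑ p : Fin n, v p)/(n:ℝ) - S/(n:ℝ))^2 := by
      rw [hG v, hG vstar, hexp, ← hSdef]
      field_simp
      ring
    have h1 : 0 ≤ ∑ p : Fin n, (v p - vstar p) * (l p - lam + 2*μ*(S/(n:ℝ) - Q)) :=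
      Finset.sum_nonneg fun p _ => hcomp p (v p) (hv0' p) (hv1' p)
    have h2 : 0 ≤ μ * ((∑ p : Fin n, v p)/(n:ℝ) - S/(n:ℝ))^2 := by positivity
    have h3 : 0 ≤ (1/(n:ℝ)) * ∑ p : Fin n, (v p - vstar p) * (l p - lam + 2*μ*(S/(n:ℝ) - Q)) :=
      mul_nonneg (by positivity) h1
    linarith [hdiff]
end

section
/- Define u* ∈ ℝ^m coordinatewise by: u*_q = 1 if l_q < λ − 2μ(q/m − P); u*_q = 0 if l_q > λ − 2μ((q−1)/m − P); and u*_q = m(P − (l_q − λ)/(2μ) − (q−1)/m) if λ − 2μ(q/m − P) ≤ l_q ≤ λ − 2μ((q−1)/m − P). Then u* ∈ [0,1]^m and u* is a global minimizer of H over [0,1]^m. -/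
/-!
With `a q = m (P + (λ - l q) / (2μ))`, which is antitone because `l` is sorted, `H` is a positive
multiple of `F u = (∑ u)² / 2 - ∑ a_q u_q` plus a constant, and `u*` is the water-filling vector
`u*_q = clamp (a_q - q) 0 1`. Since `∑_{j < m} clamp (x - j) 0 1 = clamp x 0 m`, comparing `u*`
termwise with `clamp (a_q - j) 0 1` shows that `S = ∑ u*` satisfies the KKT conditions
`S ≤ a_q` where `u*_q > 0` and `a_q ≤ S` where `u*_q < 1`. Hence every term of
`F u - F u* = ∑ (u_j - u*_j) (S - a_j) + (∑ u - S)² / 2` is nonnegative.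
-/

open Finset

noncomputable def clamp01 (x : ℝ) : ℝ := max 0 (min 1 x)

lemma clamp01_nonneg (x : ℝ) : 0 ≤ clamp01 x := le_max_left _ _

lemma clamp01_le_one (x : ℝ) : clamp01 x ≤ 1 := max_le zero_le_one (min_le_left _ _)

lemma clamp01_mono : Monotone clamp01 := fun _ _ h => max_le_max le_rfl (min_le_min le_rfl h)

lemma clamp01_of_one_le {x : ℝ} (h : 1 ≤ x) : clamp01 x = 1 := by
  simp [clamp01, h]

lemma clamp01_of_nonpos {x : ℝ} (h : x ≤ 0) : clamp01 x = 0 := by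
  simp [clamp01, min_le_of_right_le h]

lemma clamp01_eq_ite (x : ℝ) :
    clamp01 x = if 1 < x then 1 else if x < 0 then 0 else x := by
  split_ifs with h1 h0
  · exact clamp01_of_one_le h1.le
  · exact clamp01_of_nonpos h0.le
  · simp [clamp01, not_lt.mp h1, not_lt.mp h0]

lemma pos_of_clamp01_pos {x : ℝ} (h : 0 < clamp01 x) : 0 < x := by
  contrapose! h
  exact (clamp01_of_nonpos h).le

lemma lt_one_of_clamp01_lt_one {x : ℝ} (h : clamp01 x < 1) : x < 1 := by
  contrapose! h
  exact (clamp01_of_one_le h).ge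

lemma min_add_one_max_zero_eq_add_clamp01 {k : ℝ} (hk : 0 ≤ k) (x : ℝ) :
    min (k + 1) (max 0 x) = min k (max 0 x) + clamp01 (x - k) := by
  unfold clamp01
  grind

theorem sum_range_clamp01_sub (x : ℝ) (k : ℕ) :
    ∑ j ∈ range k, clamp01 (x - j) = min (k : ℝ) (max 0 x) := by
  induction k with
  | zero => simp
  | succ k ih =>
    rw [sum_range_succ, ih, Nat.cast_succ, min_add_one_max_zero_eq_add_clamp01 k.cast_nonneg]

theorem sum_clamp01_sub (x : ℝ) (m : ℕ) :
    ∑ j : Fin m, clamp01 (x - j) = min (m : ℝ) (max 0 x) :=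
  (Fin.sum_univ_eq_sum_range (fun j => clamp01 (x - j)) m).trans (sum_range_clamp01_sub x m)

lemma lt_iff_lt_of_sub_eq_mul {x y x' y' c : ℝ} (hc : 0 < c) (h : x - y = c * (x' - y')) :
    y < x ↔ y' < x' := by
  rw [← sub_pos, h, mul_pos_iff_of_pos_left hc, sub_pos]

lemma sub_mul_sub_nonneg_of_complementary {u w s a : ℝ} (hu : u ∈ Set.Icc (0 : ℝ) 1)
    (hw : w ∈ Set.Icc (0 : ℝ) 1) (h_lt_one : w < 1 → a ≤ s) (h_pos : 0 < w → s ≤ a) :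
    0 ≤ (u - w) * (s - a) := by
  rcases lt_trichotomy s a with hs | rfl | hs
  · have hw1 : w = 1 := hw.2.eq_of_not_lt fun h => (h_lt_one h).not_gt hs
    exact mul_nonneg_of_nonpos_of_nonpos (by linarith [hu.2]) (by linarith)
  · simp
  · have hw0 : w = 0 := (hw.1.eq_of_not_lt fun h => (h_pos h).not_gt hs).symm
    exact mul_nonneg (by linarith [hu.1]) (by linarith)

section WaterFill

variable {m : ℕ} {a : Fin m → ℝ}

noncomputable def waterFill (a : Fin m → ℝ) (j : Fin m) : ℝ := clamp01 (a j - (j : ℕ))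

lemma waterFill_mem_Icc (a : Fin m → ℝ) : waterFill a ∈ Set.Icc 0 1 :=
  ⟨fun _ => clamp01_nonneg _, fun _ => clamp01_le_one _⟩

lemma sum_waterFill_le (ha : Antitone a) {q : Fin m} (hq : 0 < waterFill a q) :
    ∑ j, waterFill a j ≤ a q := by
  have hq' : ((q : ℕ) : ℝ) < a q := sub_pos.mp (pos_of_clamp01_pos hq)
  calc ∑ j, waterFill a j ≤ ∑ j : Fin m, clamp01 (a q - (j : ℕ)) := sum_le_sum fun j _ => ?_
    _ = min (m : ℝ) (max 0 (a q)) := sum_clamp01_sub _ _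
    _ ≤ a q := (min_le_right _ _).trans (max_le ((Nat.cast_nonneg _).trans hq'.le) le_rfl)
  rcases lt_or_ge j q with hjq | hqj
  · have : ((j : ℕ) : ℝ) + 1 ≤ (q : ℕ) := by exact_mod_cast hjq
    rw [clamp01_of_one_le (by linarith)]
    exact clamp01_le_one _
  · exact clamp01_mono (by linarith [ha hqj])

lemma le_sum_waterFill (ha : Antitone a) {q : Fin m} (hq : waterFill a q < 1) :
    a q ≤ ∑ j, waterFill a j := by
  have hq' : a q < (q : ℕ) + 1 := by linarith [lt_one_of_clamp01_lt_one hq]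
  have hqm : ((q : ℕ) : ℝ) + 1 ≤ m := by exact_mod_cast q.isLt
  calc a q ≤ min (m : ℝ) (max 0 (a q)) := le_min (by linarith) (le_max_right _ _)
    _ = ∑ j : Fin m, clamp01 (a q - (j : ℕ)) := (sum_clamp01_sub _ _).symm
    _ ≤ ∑ j, waterFill a j := sum_le_sum fun j _ => ?_
  rcases le_or_gt j q with hjq | hqj
  · exact clamp01_mono (by linarith [ha hjq])
  · have : ((q : ℕ) : ℝ) + 1 ≤ (j : ℕ) := by exact_mod_cast hqj
    rw [clamp01_of_nonpos (by linarith)]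
    exact clamp01_nonneg _

theorem waterFill_isMinOn (ha : Antitone a) :
    IsMinOn (fun u : Fin m → ℝ => (∑ j, u j) ^ 2 / 2 - ∑ j, a j * u j) (Set.Icc 0 1)
      (waterFill a) := by
  refine isMinOn_iff.mpr fun u hu => ?_
  set w := waterFill a
  set S := ∑ j, w j
  have hsplit : ((∑ j, u j) ^ 2 / 2 - ∑ j, a j * u j) - (S ^ 2 / 2 - ∑ j, a j * w j)
      = ∑ j, (u j - w j) * (S - a j) + (∑ j, u j - S) ^ 2 / 2 := by
    simp only [sub_mul, mul_sub, sum_sub_distrib, ← sum_mul, mul_comm (a _)]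
    ring
  have hterms : 0 ≤ ∑ j, (u j - w j) * (S - a j) := sum_nonneg fun j _ =>
    sub_mul_sub_nonneg_of_complementary ⟨hu.1 j, hu.2 j⟩
      ⟨(waterFill_mem_Icc a).1 j, (waterFill_mem_Icc a).2 j⟩
      (le_sum_waterFill ha) (sum_waterFill_le ha)
  linarith [sq_nonneg (∑ j, u j - S)]

end WaterFill

section Subproblem

variable {m : ℕ} (lam μ P : ℝ) (l : Fin m → ℝ)

noncomputable def fillLevel (q : Fin m) : ℝ := m * (P + (lam - l q) / (2 * μ))

lemma fillLevel_antitone (hμ : 0 < μ) (hl : Monotone l) : Antitone (fillLevel lam μ P l) :=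
  fun i j hij => by
    unfold fillLevel
    gcongr
    exact hl hij

lemma eq_sub_fillLevel (hm : 1 ≤ m) (hμ : 0 < μ) (q : Fin m) :
    l q = lam - 2 * μ * (fillLevel lam μ P l q / m - P) := by
  have hm0 : (m : ℝ) ≠ 0 := by positivity
  unfold fillLevel
  field_simp
  ring

lemma threshold_rule_eq_waterFill (hm : 1 ≤ m) (hμ : 0 < μ) (q : Fin m) :
    (if l q < lam - 2 * μ * ((((q : ℕ) : ℝ) + 1) / (m : ℝ) - P) then 1
      else if lam - 2 * μ * (((q : ℕ) : ℝ) / (m : ℝ) - P) < l q then 0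
      else (m : ℝ) * (P - (l q - lam) / (2 * μ) - ((q : ℕ) : ℝ) / (m : ℝ)))
      = waterFill (fillLevel lam μ P l) q := by
  have hm0 : (m : ℝ) ≠ 0 := by positivity
  have hc : 0 < 2 * μ / m := by positivity
  have hl := eq_sub_fillLevel lam μ P l hm hμ q
  set a := fillLevel lam μ P l
  have hone : l q < lam - 2 * μ * ((((q : ℕ) : ℝ) + 1) / m - P) ↔ 1 < a q - (q : ℕ) := by
    rw [lt_sub_iff_add_lt']
    exact lt_iff_lt_of_sub_eq_mul hc (by rw [hl]; field_simp; ring)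
  have hzero : lam - 2 * μ * (((q : ℕ) : ℝ) / m - P) < l q ↔ a q - (q : ℕ) < 0 := by
    rw [sub_neg]
    exact lt_iff_lt_of_sub_eq_mul hc (by rw [hl]; field_simp; ring)
  have hval : (m : ℝ) * (P - (l q - lam) / (2 * μ) - ((q : ℕ) : ℝ) / m) = a q - (q : ℕ) := by
    rw [hl]
    field_simp
    ring
  rw [waterFill, clamp01_eq_ite]
  exact if_congr hone rfl (if_congr hzero rfl hval)

lemma subproblem_objective_eq (hm : 1 ≤ m) (hμ : 0 < μ) (u : Fin m → ℝ) :
    (1 / (m : ℝ)) * ∑ j, u j * l j - (lam / (m : ℝ)) * ∑ j, u j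
      + μ * ((1 / (m : ℝ)) * ∑ j, u j - P) ^ 2
      = 2 * μ / m ^ 2 * ((∑ j, u j) ^ 2 / 2 - ∑ j, fillLevel lam μ P l j * u j) + μ * P ^ 2 := by
  have hm0 : (m : ℝ) ≠ 0 := by positivity
  have hlin : ∑ j, u j * l j
      = (lam + 2 * μ * P) * ∑ j, u j - 2 * μ / m * ∑ j, fillLevel lam μ P l j * u j := by
    rw [mul_sum, mul_sum, ← sum_sub_distrib]
    exact sum_congr rfl fun j _ => by rw [eq_sub_fillLevel lam μ P l hm hμ j]; field_simp; ring
  rw [hlin]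
  field_simp
  ring

end Subproblem

theorem stmt7_general
    (m : ℕ) (hm : 1 ≤ m)
    (lam μ : ℝ) (hμ : 0 < μ)
    (P : ℝ)
    (l : Fin m → ℝ)
    (hsorted : Monotone l)
    (H : (Fin m → ℝ) → ℝ)
    (hH : ∀ u, H u = (1 / (m : ℝ)) * ∑ j : Fin m, u j * l j
      - (lam / (m : ℝ)) * ∑ j : Fin m, u j
      + μ * ((1 / (m : ℝ)) * ∑ j : Fin m, u j - P) ^ 2)
    (ustar : Fin m → ℝ)
    (hustar : ∀ q : Fin m, ustar q =
      if l q < lam - 2 * μ * ((((q : ℕ) : ℝ) + 1) / (m : ℝ) - P) then 1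
      else if lam - 2 * μ * (((q : ℕ) : ℝ) / (m : ℝ) - P) < l q then 0
      else (m : ℝ) * (P - (l q - lam) / (2 * μ) - ((q : ℕ) : ℝ) / (m : ℝ))) :
    ustar ∈ Set.Icc (0 : Fin m → ℝ) 1 ∧
      ∀ u ∈ Set.Icc (0 : Fin m → ℝ) 1, H ustar ≤ H u := by
  set a := fillLevel lam μ P l
  have hustar_eq : ustar = waterFill a :=
    funext fun q => (hustar q).trans (threshold_rule_eq_waterFill lam μ P l hm hμ q)
  refine ⟨hustar_eq ▸ waterFill_mem_Icc a, fun u hu => ?_⟩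
  rw [hH, hH, subproblem_objective_eq lam μ P l hm hμ, subproblem_objective_eq lam μ P l hm hμ,
    hustar_eq]
  gcongr 2 * μ / m ^ 2 * ?_ + _
  exact isMinOn_iff.mp (waterFill_isMinOn (fillLevel_antitone lam μ P l hμ hsorted)) u hu

/-- closed-form solution of the `u`-subproblem. With losses
`l q = (1/n) ∑_i v_i ξ_{iq}` sorted nondecreasingly and `P = (1/n) ∑_i v_i`, the vector
`u*` defined coordinatewise by the threshold rule (here the coordinate `q : Fin m`
corresponds to the `(q+1)`-st sample, so `q/m` in the paper is `((q:ℕ)+1)/m` and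
`(q−1)/m` is `(q:ℕ)/m`) lies in `[0,1]^m` and is a global minimizer of
`H(u) = (1/m)∑ u_j l_j − (λ/m)∑ u_j + μ((1/m)∑ u_j − P)²` over `[0,1]^m`. -/
theorem stmt7
    (n m : ℕ) (hn : 1 ≤ n) (hm : 1 ≤ m)
    (ξ : Fin n → Fin m → ℝ) (hξ : ∀ i j, 0 ≤ ξ i j)
    (lam μ : ℝ) (hlam : 0 < lam) (hμ : 0 < μ)
    (v : Fin n → ℝ) (hv : v ∈ Set.Icc (0 : Fin n → ℝ) 1)
    (P : ℝ) (hP : P = (1 / (n : ℝ)) * ∑ i : Fin n, v i)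
    (l : Fin m → ℝ) (hl : ∀ q, l q = (1 / (n : ℝ)) * ∑ i : Fin n, v i * ξ i q)
    (hsorted : Monotone l)
    (H : (Fin m → ℝ) → ℝ)
    (hH : ∀ u, H u = (1 / (m : ℝ)) * ∑ j : Fin m, u j * l j
      - (lam / (m : ℝ)) * ∑ j : Fin m, u j
      + μ * ((1 / (m : ℝ)) * ∑ j : Fin m, u j - P) ^ 2)
    (ustar : Fin m → ℝ)
    (hustar : ∀ q : Fin m, ustar q =
      if l q < lam - 2 * μ * ((((q : ℕ) : ℝ) + 1) / (m : ℝ) - P) then 1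
      else if lam - 2 * μ * (((q : ℕ) : ℝ) / (m : ℝ) - P) < l q then 0
      else (m : ℝ) * (P - (l q - lam) / (2 * μ) - ((q : ℕ) : ℝ) / (m : ℝ))) :
    ustar ∈ Set.Icc (0 : Fin m → ℝ) 1 ∧
      ∀ u ∈ Set.Icc (0 : Fin m → ℝ) 1, H ustar ≤ H u :=
  stmt7_general m hm lam μ hμ P l hsorted H hH ustar hustar
end

section
/- Let i < n with b_i ≤ b_{i+1}, and let v ∈ [0,1]^n with v_i + v_{i+1} ≥ 1. Let v' be obtained from v by replacing (v_i, v_{i+1}) with (1, v_i + v_{i+1} − 1). Then v' ∈ [0,1]^n and F(v') − F(v) = (b_i − b_{i+1})(1 − v_i) ≤ 0. -/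
open Finset

/-- (Case `v_i + v_{i+1} ≥ 1`.) Replacing `(v_i, v_{i+1})` by
`(1, v_i + v_{i+1} − 1)` keeps `v'` in `[0,1]^n` and
`F(v') − F(v) = (b_i − b_{i+1})(1 − v_i) ≤ 0`, where
`F(v) = ∑ v_k b_k + (1/n)(∑ v_k − nQ)²`. -/
theorem stmt9
    (n : ℕ) (b : Fin n → ℝ) (Q : ℝ)
    (F : (Fin n → ℝ) → ℝ)
    (hF : ∀ v, F v = ∑ k : Fin n, v k * b k
      + (1 / (n : ℝ)) * (∑ k : Fin n, v k - (n : ℝ) * Q) ^ 2)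
    (i : ℕ) (hi : i + 1 < n)
    (hb : b ⟨i, Nat.lt_of_succ_lt hi⟩ ≤ b ⟨i + 1, hi⟩)
    (v : Fin n → ℝ) (hv : v ∈ Set.Icc (0 : Fin n → ℝ) 1)
    (hsum : 1 ≤ v ⟨i, Nat.lt_of_succ_lt hi⟩ + v ⟨i + 1, hi⟩)
    (v' : Fin n → ℝ)
    (hv' : v' = Function.update
      (Function.update v ⟨i, Nat.lt_of_succ_lt hi⟩ 1)
      ⟨i + 1, hi⟩ (v ⟨i, Nat.lt_of_succ_lt hi⟩ + v ⟨i + 1, hi⟩ - 1)) :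
    v' ∈ Set.Icc (0 : Fin n → ℝ) 1 ∧
      F v' - F v = (b ⟨i, Nat.lt_of_succ_lt hi⟩ - b ⟨i + 1, hi⟩)
        * (1 - v ⟨i, Nat.lt_of_succ_lt hi⟩) ∧
      F v' - F v ≤ 0 := by
  set I : Fin n := ⟨i, Nat.lt_of_succ_lt hi⟩ with hIdef
  set J : Fin n := ⟨i + 1, hi⟩ with hJdef
  have hIJ : I ≠ J := by
    simp [hIdef, hJdef, Fin.ext_iff]
  have hlo : ∀ k, 0 ≤ v k := fun k => hv.1 k
  have hhi : ∀ k, v k ≤ 1 := fun k => hv.2 k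
  have hI : v' I = 1 := by
    rw [hv', Function.update_of_ne hIJ, Function.update_self]
  have hJ : v' J = v I + v J - 1 := by
    rw [hv', Function.update_self]
  have hd : ∀ k, k ≠ I → k ≠ J → v' k = v k := by
    intro k hkI hkJ
    rw [hv', Function.update_of_ne hkJ, Function.update_of_ne hkI]
  have key : ∀ c : Fin n → ℝ,
      ∑ k : Fin n, (v' k * c k - v k * c k)
        = (1 - v I) * c I + (v I - 1) * c J := by
    intro c
    rw [← Finset.sum_subset (Finset.subset_univ ({I, J} : Finset (Fin n)))]
    · rw [Finset.sum_pair hIJ, hI, hJ]; ring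
    · intro x _ hx
      simp only [Finset.mem_insert, Finset.mem_singleton, not_or] at hx
      rw [hd x hx.1 hx.2]; ring
  have hsums : ∑ k : Fin n, v' k = ∑ k : Fin n, v k := by
    have h := key (fun _ => 1)
    simp only [mul_one] at h
    rw [Finset.sum_sub_distrib] at h
    linarith
  have hlin : ∑ k : Fin n, v' k * b k - ∑ k : Fin n, v k * b k
      = (b I - b J) * (1 - v I) := by
    have h := key b
    rw [Finset.sum_sub_distrib] at h
    rw [h]; ring
  have hFd : F v' - F v = (b I - b J) * (1 - v I) := by
    rw [hF, hF, hsums]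
    linarith [hlin]
  refine ⟨⟨fun k => ?_, fun k => ?_⟩, hFd, ?_⟩ <;> try simp only [Pi.zero_apply, Pi.one_apply]
  · by_cases hkI : k = I
    · subst hkI; rw [hI]; norm_num
    · by_cases hkJ : k = J
      · subst hkJ; rw [hJ]; linarith
      · rw [hd k hkI hkJ]; exact hlo k
  · by_cases hkI : k = I
    · subst hkI; rw [hI]
    · by_cases hkJ : k = J
      · subst hkJ; rw [hJ]; have := hhi I; have := hhi J
        show v I + v J - 1 ≤ 1; linarith
      · rw [hd k hkI hkJ]; exact hhi k
  · rw [hFd]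
    have h1 : b I - b J ≤ 0 := by linarith
    have h2 : 0 ≤ 1 - v I := by linarith [hhi I]
    exact mul_nonpos_of_nonpos_of_nonneg h1 h2
end

section
/- Let i < n with b_i ≤ b_{i+1}, and let v ∈ [0,1]^n with v_i + v_{i+1} ≤ 1. Let v' be obtained from v by replacing (v_i, v_{i+1}) with (v_i + v_{i+1}, 0). Then v' ∈ [0,1]^n and F(v') − F(v) = (b_i − b_{i+1}) v_{i+1} ≤ 0. -/
/-!
Moving the mass `v_{i+1}` onto coordinate `i` leaves `∑ v_k` unchanged, so the quadratic
term of `F` does not move and only the linear term changes, by `(b_i - b_{i+1}) v_{i+1}`.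
-/

open Finset

section MoveMass

variable {ι R : Type*} [DecidableEq ι]

theorem Finset.sum_sub_sum_eq_of_eqOn_compl_pair [Fintype ι] [AddCommGroup R] {f g : ι → R}
    {j k : ι} (hjk : j ≠ k) (h : ∀ i, i ≠ j → i ≠ k → f i = g i) :
    ∑ i, f i - ∑ i, g i = (f j - g j) + (f k - g k) := by
  rw [← sum_sub_distrib, ← sum_subset (subset_univ {j, k}), sum_pair hjk]
  intro i _ hi
  simp only [mem_insert, mem_singleton, not_or] at hi
  rw [h i hi.1 hi.2, sub_self]

def moveMass [Add R] [Zero R] (v : ι → R) (k j : ι) : ι → R :=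
  Function.update (Function.update v j (v j + v k)) k 0

variable [AddCommMonoid R] {v : ι → R} {j k : ι}

theorem moveMass_apply_target (hjk : j ≠ k) : moveMass v k j j = v j + v k := by
  rw [moveMass, Function.update_of_ne hjk, Function.update_self]

theorem moveMass_apply_source : moveMass v k j k = 0 :=
  Function.update_self ..

theorem moveMass_apply_of_ne {i : ι} (hij : i ≠ j) (hik : i ≠ k) : moveMass v k j i = v i := by
  rw [moveMass, Function.update_of_ne hik, Function.update_of_ne hij]

theorem moveMass_mem_Icc [PartialOrder R] [IsOrderedAddMonoid R] [One R] (hjk : j ≠ k)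
    (hv : v ∈ Set.Icc 0 1) (hsum : v j + v k ≤ 1) : moveMass v k j ∈ Set.Icc 0 1 := by
  suffices ∀ i, moveMass v k j i ∈ Set.Icc (0 : R) 1 from
    ⟨fun i => (this i).1, fun i => (this i).2⟩
  intro i
  rcases eq_or_ne i k with rfl | hik
  · rw [moveMass_apply_source]
    exact ⟨le_rfl, (hv.1 i).trans (hv.2 i)⟩
  rcases eq_or_ne i j with rfl | hij
  · rw [moveMass_apply_target hjk]
    exact ⟨add_nonneg (hv.1 i) (hv.1 k), hsum⟩
  · rw [moveMass_apply_of_ne hij hik]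
    exact ⟨hv.1 i, hv.2 i⟩

end MoveMass

section MoveMassSums

variable {ι R : Type*} [DecidableEq ι] [Fintype ι] {j k : ι}

theorem sum_moveMass [AddCommGroup R] (v : ι → R) (hjk : j ≠ k) :
    ∑ i, moveMass v k j i = ∑ i, v i := by
  have := sum_sub_sum_eq_of_eqOn_compl_pair (f := moveMass v k j) (g := v) hjk
    fun i hij hik => moveMass_apply_of_ne hij hik
  rw [moveMass_apply_target hjk, moveMass_apply_source] at this
  exact sub_eq_zero.mp (this.trans (by abel))

theorem sum_moveMass_mul [CommRing R] (v b : ι → R) (hjk : j ≠ k) :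
    ∑ i, moveMass v k j i * b i = ∑ i, v i * b i + (b j - b k) * v k := by
  have := sum_sub_sum_eq_of_eqOn_compl_pair (f := fun i => moveMass v k j i * b i)
    (g := fun i => v i * b i) hjk fun i hij hik => by rw [moveMass_apply_of_ne hij hik]
  rw [moveMass_apply_target hjk, moveMass_apply_source] at this
  linear_combination this

end MoveMassSums

/-- (Case `v_i + v_{i+1} ≤ 1`.) Replacing `(v_i, v_{i+1})` by
`(v_i + v_{i+1}, 0)` keeps `v'` in `[0,1]^n` and
`F(v') − F(v) = (b_i − b_{i+1}) v_{i+1} ≤ 0`, where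
`F(v) = ∑ v_k b_k + (1/n)(∑ v_k − nQ)²`. -/
theorem stmt10
    (n : ℕ) (b : Fin n → ℝ) (Q : ℝ)
    (F : (Fin n → ℝ) → ℝ)
    (hF : ∀ v, F v = ∑ k : Fin n, v k * b k
      + (1 / (n : ℝ)) * (∑ k : Fin n, v k - (n : ℝ) * Q) ^ 2)
    (i : ℕ) (hi : i + 1 < n)
    (hb : b ⟨i, Nat.lt_of_succ_lt hi⟩ ≤ b ⟨i + 1, hi⟩)
    (v : Fin n → ℝ) (hv : v ∈ Set.Icc (0 : Fin n → ℝ) 1)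
    (hsum : v ⟨i, Nat.lt_of_succ_lt hi⟩ + v ⟨i + 1, hi⟩ ≤ 1)
    (v' : Fin n → ℝ)
    (hv' : v' = Function.update
      (Function.update v ⟨i, Nat.lt_of_succ_lt hi⟩
        (v ⟨i, Nat.lt_of_succ_lt hi⟩ + v ⟨i + 1, hi⟩))
      ⟨i + 1, hi⟩ 0) :
    v' ∈ Set.Icc (0 : Fin n → ℝ) 1 ∧
      F v' - F v = (b ⟨i, Nat.lt_of_succ_lt hi⟩ - b ⟨i + 1, hi⟩) * v ⟨i + 1, hi⟩ ∧
      F v' - F v ≤ 0 := by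
  set j : Fin n := ⟨i, Nat.lt_of_succ_lt hi⟩
  set k : Fin n := ⟨i + 1, hi⟩
  have hjk : j ≠ k := Fin.ne_of_val_ne (Nat.succ_ne_self i).symm
  have hv'_eq : v' = moveMass v k j := hv'
  have hdiff : F v' - F v = (b j - b k) * v k := by
    rw [hF, hF, hv'_eq, sum_moveMass v hjk, sum_moveMass_mul v b hjk]
    ring
  refine ⟨hv'_eq ▸ moveMass_mem_Icc hjk hv hsum, hdiff, ?_⟩
  rw [hdiff]
  exact mul_nonpos_of_nonpos_of_nonneg (sub_nonpos.mpr hb) (hv.1 k)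
end

section
/- Assume b_1 ≤ b_2 ≤ … ≤ b_n. Then there exists a global minimizer v of F over [0,1]^n and an index p ∈ {1,…,n} such that v_i = 1 for all i < p, v_i = 0 for all i > p, and v_p ∈ [0,1]; that is, at most one coordinate of v is different from 0 and 1, and the coordinates are nonincreasing. -/
open Finset

/-- Sum of clamps: `∑_{i<m} clamp(s-i) = s` when `0 ≤ s ≤ m`. -/
lemma sumClamp : ∀ (m : ℕ) (s : ℝ), 0 ≤ s → s ≤ m →
    ∑ i ∈ Finset.range m, max 0 (min 1 (s - i)) = s := by
  intro m
  induction m with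
  | zero =>
      intro s h0 h1
      simp only [Nat.cast_zero] at h1
      have : s = 0 := le_antisymm h1 h0
      simp [this]
  | succ m ih =>
      intro s h0 h1
      rw [Finset.sum_range_succ']
      rcases le_or_gt s 1 with hs | hs
      · have hrest : ∀ i ∈ Finset.range m, max 0 (min 1 (s - (↑(i + 1) : ℝ))) = 0 := by
          intro i _
          have h2 : s - (↑(i + 1) : ℝ) ≤ 0 := by
            have : (1 : ℝ) ≤ (↑(i + 1) : ℝ) := by exact_mod_cast Nat.one_le_iff_ne_zero.mpr (by omega)
            linarith
          have : min 1 (s - (↑(i + 1) : ℝ)) ≤ 0 := le_trans (min_le_right _ _) h2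
          exact max_eq_left this
        rw [Finset.sum_congr rfl hrest]
        simp only [Finset.sum_const_zero, zero_add, Nat.cast_zero, sub_zero]
        rw [min_eq_right hs, max_eq_right h0]
      · have hrest : ∀ i ∈ Finset.range m,
            max 0 (min 1 (s - (↑(i + 1) : ℝ))) = max 0 (min 1 ((s - 1) - ↑i)) := by
          intro i _
          congr 1
          push_cast
          ring_nf
        rw [Finset.sum_congr rfl hrest, ih (s - 1) (by linarith) (by push_cast at h1 ⊢; linarith)]
        have : max 0 (min 1 (s - (↑(0:ℕ) : ℝ))) = 1 := by
          simp only [Nat.cast_zero, sub_zero]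
          rw [min_eq_left (le_of_lt hs), max_eq_right zero_le_one]
        rw [this]; ring

/-- If `b_1 ≤ b_2 ≤ … ≤ b_n`, then there exists a global minimizer `v` of
`F(v) = ∑ v_k b_k + (1/n)(∑ v_k − nQ)²` over `[0,1]^n` of the form
`v = (1,…,1, v_p, 0,…,0)`: for some index `p`, `v i = 1` for `i < p`, `v i = 0` for
`i > p`, and `v p ∈ [0,1]`. -/
theorem stmt11
    (n : ℕ) (hn : 1 ≤ n) (b : Fin n → ℝ) (Q : ℝ)
    (hb : Monotone b)
    (F : (Fin n → ℝ) → ℝ)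
    (hF : ∀ v, F v = ∑ k : Fin n, v k * b k
      + (1 / (n : ℝ)) * (∑ k : Fin n, v k - (n : ℝ) * Q) ^ 2) :
    ∃ v ∈ Set.Icc (0 : Fin n → ℝ) 1,
      (∀ w ∈ Set.Icc (0 : Fin n → ℝ) 1, F v ≤ F w) ∧
      ∃ p : Fin n, (∀ i : Fin n, i < p → v i = 1) ∧ (∀ i : Fin n, p < i → v i = 0) ∧
        v p ∈ Set.Icc (0 : ℝ) 1 := by
  have hFeq : F = fun v => ∑ k : Fin n, v k * b k
      + (1 / (n : ℝ)) * (∑ k : Fin n, v k - (n : ℝ) * Q) ^ 2 := funext hF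
  subst hFeq
  set F : (Fin n → ℝ) → ℝ := fun v => ∑ k : Fin n, v k * b k
      + (1 / (n : ℝ)) * (∑ k : Fin n, v k - (n : ℝ) * Q) ^ 2 with hFdef
  -- continuity
  have hcont : Continuous F := by
    apply Continuous.add
    · exact continuous_finset_sum _ fun k _ => (continuous_apply k).mul continuous_const
    · exact continuous_const.mul
        (((continuous_finset_sum _ fun k _ => continuous_apply k).sub continuous_const).pow 2)
  -- compactness: get a minimizer u
  have hcomp : IsCompact (Set.Icc (0 : Fin n → ℝ) 1) := isCompact_Icc
  have hne : (Set.Icc (0 : Fin n → ℝ) 1).Nonempty := ⟨0, Set.left_mem_Icc.mpr zero_le_one⟩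
  obtain ⟨u, huI, humin⟩ := hcomp.exists_isMinOn hne hcont.continuousOn
  obtain ⟨hu0, hu1⟩ := huI
  have hu0' : ∀ i, (0:ℝ) ≤ u i := fun i => hu0 i
  have hu1' : ∀ i, u i ≤ 1 := fun i => hu1 i
  set s : ℝ := ∑ k : Fin n, u k with hs
  have h0s : 0 ≤ s := Finset.sum_nonneg fun i _ => hu0' i
  have hsn : s ≤ n := by
    calc s ≤ ∑ _k : Fin n, (1:ℝ) := Finset.sum_le_sum fun i _ => hu1' i
    _ = n := by simp
  -- the staircase vector
  set w : Fin n → ℝ := fun i => max 0 (min 1 (s - (i : ℕ))) with hwdef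
  have hw0 : ∀ i, (0:ℝ) ≤ w i := fun i => le_max_left _ _
  have hw1 : ∀ i, w i ≤ 1 := fun i => max_le zero_le_one (min_le_left _ _)
  have hwI : w ∈ Set.Icc (0 : Fin n → ℝ) 1 := ⟨fun i => hw0 i, fun i => hw1 i⟩
  -- ℕ-indexed versions
  set vv : ℕ → ℝ := fun i => if h : i < n then u ⟨i, h⟩ else 0 with hvv
  set ww : ℕ → ℝ := fun i => max 0 (min 1 (s - (i : ℕ))) with hww
  set bb : ℕ → ℝ := fun i => b ⟨min i (n-1), by omega⟩ with hbb
  have hbbk : ∀ k : Fin n, bb k = b k := by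
    intro k
    have : min (k : ℕ) (n-1) = k := min_eq_left (by omega)
    simp only [hbb]
    congr 1
    exact Fin.ext this
  have hbbmono : ∀ i j : ℕ, i ≤ j → bb i ≤ bb j := by
    intro i j hij
    exact hb (by simp only [Fin.mk_le_mk]; omega)
  -- sum conversions
  have hsumv : ∑ i ∈ range n, vv i = s := by
    rw [hs, ← Fin.sum_univ_eq_sum_range vv n]
    refine Finset.sum_congr rfl fun k _ => ?_
    simp [hvv, k.isLt]
  have hsumw : ∑ i ∈ range n, ww i = s := sumClamp n s h0s hsn
  have hsumwFin : ∑ k : Fin n, w k = s := by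
    rw [← hsumw, ← Fin.sum_univ_eq_sum_range ww n]
  -- prefix sums comparison
  have hprefix : ∀ k, k ≤ n → ∑ i ∈ range k, vv i ≤ ∑ i ∈ range k, ww i := by
    intro k hk
    have hvk : ∑ i ∈ range k, vv i ≤ k := by
      calc ∑ i ∈ range k, vv i ≤ ∑ _i ∈ range k, (1:ℝ) := by
            refine Finset.sum_le_sum fun i hi => ?_
            have hi' : i < n := lt_of_lt_of_le (Finset.mem_range.mp hi) hk
            simp [hvv, hi', hu1' ⟨i, hi'⟩]
      _ = k := by simp
    have hvs : ∑ i ∈ range k, vv i ≤ s := by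
      rw [← hsumv]
      refine Finset.sum_le_sum_of_subset_of_nonneg
        (Finset.range_subset_range.mpr hk) fun i hi _ => ?_
      have hi' : i < n := Finset.mem_range.mp hi
      simp [hvv, hi', hu0' ⟨i, hi'⟩]
    rcases le_or_gt s k with hcase | hcase
    · rw [sumClamp k s h0s hcase]; exact hvs
    · have : ∑ i ∈ range k, ww i = k := by
        have hall : ∀ i ∈ range k, ww i = 1 := by
          intro i hi
          have hi' : (i:ℝ) < k := by exact_mod_cast Finset.mem_range.mp hi
          have hi'' : (i:ℝ) + 1 ≤ k := by
            have : i + 1 ≤ k := Finset.mem_range.mp hi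
            exact_mod_cast this
          have h1 : (1:ℝ) ≤ s - i := by linarith
          simp only [hww]
          rw [min_eq_left h1, max_eq_right zero_le_one]
        rw [Finset.sum_congr rfl hall]; simp
      rw [this]; exact hvk
  -- Key inequality: linear part of w smaller
  have hkey : ∑ k : Fin n, w k * b k ≤ ∑ k : Fin n, u k * b k := by
    have hW : ∑ k : Fin n, w k * b k = ∑ i ∈ range n, bb i • ww i := by
      rw [← Fin.sum_univ_eq_sum_range (fun i => bb i • ww i) n]
      refine Finset.sum_congr rfl fun k _ => ?_
      rw [hbbk k, smul_eq_mul, mul_comm]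
    have hV : ∑ k : Fin n, u k * b k = ∑ i ∈ range n, bb i • vv i := by
      rw [← Fin.sum_univ_eq_sum_range (fun i => bb i • vv i) n]
      refine Finset.sum_congr rfl fun k _ => ?_
      rw [hbbk k, smul_eq_mul, mul_comm]
      congr 1
      simp [hvv, k.isLt]
    rw [hW, hV, Finset.sum_range_by_parts bb ww n, Finset.sum_range_by_parts bb vv n,
      hsumv, hsumw]
    have : ∑ i ∈ range (n-1), (bb (i+1) - bb i) • ∑ j ∈ range (i+1), vv j
        ≤ ∑ i ∈ range (n-1), (bb (i+1) - bb i) • ∑ j ∈ range (i+1), ww j := by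
      refine Finset.sum_le_sum fun i hi => ?_
      have hd : 0 ≤ bb (i+1) - bb i := sub_nonneg.mpr (hbbmono i (i+1) (Nat.le_succ i))
      have hP : ∑ j ∈ range (i+1), vv j ≤ ∑ j ∈ range (i+1), ww j := by
        apply hprefix
        have := Finset.mem_range.mp hi
        omega
      exact smul_le_smul_of_nonneg_left hP hd
    linarith
  -- F w ≤ F u
  have hFwu : F w ≤ F u := by
    simp only [hFdef, hsumwFin, ← hs]
    linarith
  refine ⟨w, hwI, fun x hx => le_trans hFwu (humin hx), ?_⟩
  -- the staircase index p
  refine ⟨⟨min (Nat.floor s) (n-1), by omega⟩, ?_, ?_, hwI.1 _, hwI.2 _⟩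
  · intro i hi
    have hi' : (i : ℕ) < min (Nat.floor s) (n-1) := hi
    have h1 : (i : ℕ) + 1 ≤ Nat.floor s := by omega
    have h2 : ((i:ℕ) : ℝ) + 1 ≤ s := by
      have := Nat.floor_le h0s
      have h3 : (((i:ℕ) + 1 : ℕ) : ℝ) ≤ (Nat.floor s : ℝ) := by exact_mod_cast h1
      push_cast at h3
      linarith
    simp only [hwdef]
    rw [min_eq_left (by linarith), max_eq_right zero_le_one]
  · intro i hi
    have hi' : min (Nat.floor s) (n-1) < (i : ℕ) := hi
    have hin : (i : ℕ) ≤ n - 1 := by omega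
    have hm : Nat.floor s < (i : ℕ) := by omega
    have h2 : s < (i : ℕ) := by
      have := Nat.lt_floor_add_one s
      have h3 : ((Nat.floor s : ℕ) : ℝ) + 1 ≤ ((i:ℕ) : ℝ) := by exact_mod_cast hm
      linarith
    simp only [hwdef]
    have : min 1 (s - (i:ℕ)) ≤ 0 := le_trans (min_le_right _ _) (by linarith)
    rw [max_eq_left this]
end

section
/- Assume b_1 < b_2 < … < b_n (strictly increasing). Then F has a unique global minimizer v over [0,1]^n, and for every i ∈ {1,…,n}: v_i = 1 if and only if −b_i/2 ≥ i/n − Q; v_i = 0 if and only if −b_i/2 ≤ (i−1)/n − Q; and if (i−1)/n − Q < −b_i/2 < i/n − Q then v_i = nQ − n·b_i/2 − (i−1) ∈ (0,1). -/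
open Finset

private def cl (x : ℝ) : ℝ := min 1 (max 0 x)

private lemma cl_nonneg (x : ℝ) : 0 ≤ cl x := le_min zero_le_one (le_max_left _ _)
private lemma cl_le_one (x : ℝ) : cl x ≤ 1 := min_le_left _ _
private lemma cl_mono {x y : ℝ} (h : x ≤ y) : cl x ≤ cl y :=
  min_le_min le_rfl (max_le_max le_rfl h)
private lemma cl_of_le_zero {x : ℝ} (h : x ≤ 0) : cl x = 0 := by
  simp [cl, max_eq_left h]
private lemma cl_of_one_le {x : ℝ} (h : 1 ≤ x) : cl x = 1 := by
  have h0 : max 0 x = x := max_eq_right (le_trans zero_le_one h)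
  simp [cl, h0, min_eq_left h]
private lemma cl_of_mem {x : ℝ} (h0 : 0 ≤ x) (h1 : x ≤ 1) : cl x = x := by
  simp [cl, max_eq_right h0, min_eq_right h1]
private lemma cl_eq_one_iff {x : ℝ} : cl x = 1 ↔ 1 ≤ x := by
  constructor
  · intro h
    by_contra hx
    push_neg at hx
    rcases le_total x 0 with h0 | h0
    · rw [cl_of_le_zero h0] at h; norm_num at h
    · rw [cl_of_mem h0 hx.le] at h; exact absurd h hx.ne
  · exact cl_of_one_le
private lemma cl_eq_zero_iff {x : ℝ} : cl x = 0 ↔ x ≤ 0 := by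
  constructor
  · intro h
    by_contra hx
    push_neg at hx
    rcases le_total 1 x with h1 | h1
    · rw [cl_of_one_le h1] at h; norm_num at h
    · rw [cl_of_mem hx.le h1] at h; exact absurd h hx.ne'
  · exact cl_of_le_zero

private lemma cl_sum_le : ∀ (m : ℕ) (M : ℝ),
    (∑ j ∈ Finset.range m, cl (M - j)) ≤ max 0 M := by
  intro m
  induction m with
  | zero => intro M; simp
  | succ m ih =>
    intro M
    rw [Finset.sum_range_succ']
    have h1 : ∀ j ∈ Finset.range m, cl (M - ((j : ℕ) + 1 : ℕ)) = cl ((M - 1) - j) := by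
      intro j _
      congr 1
      push_cast
      ring
    rw [Finset.sum_congr rfl h1]
    have h2 := ih (M - 1)
    have h3 : cl (M - (0 : ℕ)) = cl M := by norm_num
    rw [h3]
    rcases le_total M 0 with h | h
    · rw [cl_of_le_zero h, max_eq_left h, max_eq_left (by linarith : M - 1 ≤ 0)] at *
      linarith
    · rcases le_total M 1 with h' | h'
      · rw [cl_of_mem h h', max_eq_right h, max_eq_left (by linarith : M - 1 ≤ 0)] at *
        linarith
      · rw [cl_of_one_le h', max_eq_right h, max_eq_right (by linarith : (0:ℝ) ≤ M - 1)] at *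
        linarith

private lemma le_cl_sum : ∀ (m : ℕ) (M : ℝ), 0 ≤ M → M ≤ m →
    M ≤ ∑ j ∈ Finset.range m, cl (M - j) := by
  intro m
  induction m with
  | zero => intro M h0 h1; simp at h1 ⊢; linarith
  | succ m ih =>
    intro M h0 h1
    rw [Finset.sum_range_succ']
    have hcongr : ∀ j ∈ Finset.range m, cl (M - ((j : ℕ) + 1 : ℕ)) = cl ((M - 1) - j) := by
      intro j _
      congr 1
      push_cast
      ring
    rw [Finset.sum_congr rfl hcongr]
    have h3 : cl (M - (0 : ℕ)) = cl M := by norm_num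
    rw [h3]
    rcases le_total M 1 with h | h
    · have : cl M = M := cl_of_mem h0 h
      have hnn : (0:ℝ) ≤ ∑ j ∈ Finset.range m, cl ((M - 1) - j) :=
        Finset.sum_nonneg fun j _ => cl_nonneg _
      rw [this]
      linarith
    · have hone : cl M = 1 := cl_of_one_le h
      have hcast : (M : ℝ) - 1 ≤ m := by push_cast at h1 ⊢; linarith
      have := ih (M - 1) (by linarith) hcast
      rw [hone]
      linarith

open Finset

/-- If `b_1 < b_2 < … < b_n`, then
`F(v) = ∑ v_k b_k + (1/n)(∑ v_k − nQ)²` has a unique global minimizer `v` over `[0,1]^n`,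
characterized coordinatewise by the threshold rule (here the coordinate `i : Fin n`
corresponds to the `(i+1)`-st sample, so `i/n` in the paper is `((i:ℕ)+1)/n`, `(i−1)/n`
is `(i:ℕ)/n`, and `nQ − n b_i/2 − (i−1)` is `nQ − n b_i/2 − (i:ℕ)`):
`v i = 1 ↔ −b_i/2 ≥ ((i:ℕ)+1)/n − Q`; `v i = 0 ↔ −b_i/2 ≤ (i:ℕ)/n − Q`; and if
`(i:ℕ)/n − Q < −b_i/2 < ((i:ℕ)+1)/n − Q` then `v i = nQ − n b_i/2 − (i:ℕ) ∈ (0,1)`. -/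
theorem stmt12
    (n : ℕ) (hn : 1 ≤ n) (b : Fin n → ℝ) (Q : ℝ)
    (hb : StrictMono b)
    (F : (Fin n → ℝ) → ℝ)
    (hF : ∀ v, F v = ∑ k : Fin n, v k * b k
      + (1 / (n : ℝ)) * (∑ k : Fin n, v k - (n : ℝ) * Q) ^ 2) :
    ∃ v : Fin n → ℝ,
      (v ∈ Set.Icc (0 : Fin n → ℝ) 1 ∧ ∀ w ∈ Set.Icc (0 : Fin n → ℝ) 1, F v ≤ F w) ∧
      (∀ w : Fin n → ℝ,
        (w ∈ Set.Icc (0 : Fin n → ℝ) 1 ∧ ∀ x ∈ Set.Icc (0 : Fin n → ℝ) 1, F w ≤ F x) →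
        w = v) ∧
      ∀ i : Fin n,
        (v i = 1 ↔ (((i : ℕ) : ℝ) + 1) / (n : ℝ) - Q ≤ -(b i) / 2) ∧
        (v i = 0 ↔ -(b i) / 2 ≤ ((i : ℕ) : ℝ) / (n : ℝ) - Q) ∧
        ((((i : ℕ) : ℝ) / (n : ℝ) - Q < -(b i) / 2 ∧
            -(b i) / 2 < (((i : ℕ) : ℝ) + 1) / (n : ℝ) - Q) →
          v i = (n : ℝ) * Q - (n : ℝ) * b i / 2 - ((i : ℕ) : ℝ) ∧
            v i ∈ Set.Ioo (0 : ℝ) 1) := by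
  have hn' : (0 : ℝ) < n := by exact_mod_cast Nat.lt_of_lt_of_le Nat.zero_lt_one hn
  set M : Fin n → ℝ := fun i => (n : ℝ) * Q - (n : ℝ) * b i / 2 with hM
  set v : Fin n → ℝ := fun i => cl (M i - (i : ℕ)) with hvdef
  set S : ℝ := ∑ i : Fin n, v i with hS
  -- M is strictly antitone
  have hMlt : ∀ {i j : Fin n}, i < j → M j < M i := by
    intro i j h
    have := hb h
    simp only [hM]
    nlinarith
  have hMle : ∀ {i j : Fin n}, i ≤ j → M j ≤ M i := by
    intro i j h
    rcases eq_or_lt_of_le h with rfl | h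
    · exact le_rfl
    · exact (hMlt h).le
  -- sum as a range sum
  set W : ℕ → ℝ := fun j => if h : j < n then cl (M ⟨j, h⟩ - j) else 0 with hWdef
  have hSW : S = ∑ j ∈ Finset.range n, W j := by
    rw [hS, ← Fin.sum_univ_eq_sum_range]
    refine Finset.sum_congr rfl fun i _ => ?_
    simp only [hWdef, hvdef, i.isLt, dif_pos, Fin.eta]
  have hW0 : ∀ j, 0 ≤ W j := by
    intro j; simp only [hWdef]; split
    · exact cl_nonneg _
    · exact le_rfl
  have hW1 : ∀ j, W j ≤ 1 := by
    intro j; simp only [hWdef]; split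
    · exact cl_le_one _
    · exact zero_le_one
  have hSnn : 0 ≤ S := by
    rw [hSW]; exact Finset.sum_nonneg fun j _ => hW0 j
  -- KKT bound for v i = 1
  have hA : ∀ i : Fin n, 1 ≤ M i - (i : ℕ) → S ≤ M i := by
    intro i hi
    rw [hSW, Finset.range_eq_Ico,
      ← Finset.sum_Ico_consecutive _ (Nat.zero_le (i : ℕ)) i.isLt.le]
    have h1 : ∑ j ∈ Finset.Ico 0 (i : ℕ), W j ≤ (i : ℕ) := by
      calc ∑ j ∈ Finset.Ico 0 (i : ℕ), W j ≤ ∑ _j ∈ Finset.Ico 0 (i : ℕ), (1 : ℝ) :=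
            Finset.sum_le_sum fun j _ => hW1 j
        _ = (i : ℕ) := by simp
    have h2 : ∑ j ∈ Finset.Ico (i : ℕ) n, W j ≤ M i - (i : ℕ) := by
      have step1 : ∑ j ∈ Finset.Ico (i : ℕ) n, W j
          ≤ ∑ j ∈ Finset.Ico (i : ℕ) n, cl (M i - j) := by
        refine Finset.sum_le_sum fun j hj => ?_
        rw [Finset.mem_Ico] at hj
        simp only [hWdef, hj.2, dif_pos]
        refine cl_mono ?_
        have : M ⟨j, hj.2⟩ ≤ M i := hMle (by simpa [Fin.le_def] using hj.1)
        linarith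
      have step2 : ∑ j ∈ Finset.Ico (i : ℕ) n, cl (M i - j) ≤ max 0 (M i - (i : ℕ)) := by
        rw [Finset.sum_Ico_eq_sum_range]
        have hc : ∀ j ∈ Finset.range (n - (i : ℕ)), cl (M i - ((i : ℕ) + j : ℕ))
            = cl ((M i - (i : ℕ)) - j) := by
          intro j _
          congr 1
          push_cast
          ring
        rw [Finset.sum_congr rfl hc]
        exact cl_sum_le _ _
      have : max 0 (M i - (i : ℕ)) = M i - (i : ℕ) := max_eq_right (by linarith)
      linarith
    linarith
  -- KKT bound for v i = 0
  have hB : ∀ i : Fin n, M i - (i : ℕ) ≤ 0 → M i ≤ S := by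
    intro i hi
    rcases le_or_gt (M i) 0 with h | h
    · linarith
    · have hMi : M i ≤ (i : ℕ) := by linarith
      have step1 : M i ≤ ∑ j ∈ Finset.range (i : ℕ), cl (M i - j) :=
        le_cl_sum _ _ h.le hMi
      have step2 : ∑ j ∈ Finset.range (i : ℕ), cl (M i - j)
          ≤ ∑ j ∈ Finset.range (i : ℕ), W j := by
        refine Finset.sum_le_sum fun j hj => ?_
        rw [Finset.mem_range] at hj
        have hjn : j < n := lt_trans hj i.isLt
        simp only [hWdef, hjn, dif_pos]
        refine cl_mono ?_
        have : M i ≤ M ⟨j, hjn⟩ := hMle (by simpa [Fin.le_def] using hj.le)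
        linarith
      have step3 : ∑ j ∈ Finset.range (i : ℕ), W j ≤ ∑ j ∈ Finset.range n, W j := by
        refine Finset.sum_le_sum_of_subset_of_nonneg
          (Finset.range_subset_range.mpr i.isLt.le) fun j _ _ => hW0 j
      rw [hSW]
      linarith
  -- exact value in fractional case
  have hC : ∀ i : Fin n, 0 < M i - (i : ℕ) → M i - (i : ℕ) < 1 → S = M i := by
    intro i h0 h1
    rw [hSW, Finset.range_eq_Ico,
      ← Finset.sum_Ico_consecutive _ (Nat.zero_le (i : ℕ)) i.isLt.le,
      Finset.sum_eq_sum_Ico_succ_bot i.isLt]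
    have p1 : ∑ j ∈ Finset.Ico 0 (i : ℕ), W j = (i : ℕ) := by
      have : ∀ j ∈ Finset.Ico 0 (i : ℕ), W j = 1 := by
        intro j hj
        rw [Finset.mem_Ico] at hj
        have hjn : j < n := lt_trans hj.2 i.isLt
        have hji : (⟨j, hjn⟩ : Fin n) < i := by simpa [Fin.lt_def] using hj.2
        have hMj : M i < M ⟨j, hjn⟩ := hMlt hji
        have hj1 : (j : ℝ) + 1 ≤ (i : ℕ) := by exact_mod_cast hj.2
        simp only [hWdef, hjn, dif_pos]
        exact cl_of_one_le (by linarith)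
      rw [Finset.sum_congr rfl this]
      simp
    have p2 : W (i : ℕ) = M i - (i : ℕ) := by
      simp only [hWdef, i.isLt, dif_pos, Fin.eta]
      exact cl_of_mem h0.le h1.le
    have p3 : ∑ j ∈ Finset.Ico ((i : ℕ) + 1) n, W j = 0 := by
      refine Finset.sum_eq_zero fun j hj => ?_
      rw [Finset.mem_Ico] at hj
      have hjn : j < n := hj.2
      have hij : i < (⟨j, hjn⟩ : Fin n) := by
        simp only [Fin.lt_def]
        omega
      have hMj : M ⟨j, hjn⟩ < M i := hMlt hij
      have hj1 : ((i : ℕ) : ℝ) + 1 ≤ (j : ℝ) := by exact_mod_cast hj.1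
      simp only [hWdef, hjn, dif_pos]
      exact cl_of_le_zero (by linarith)
    rw [p1, p2, p3]
    ring
  -- pointwise sign condition
  have hsign : ∀ (i : Fin n) (x : ℝ), 0 ≤ x → x ≤ 1 → 0 ≤ (v i - x) * (M i - S) := by
    intro i x hx0 hx1
    rcases le_or_gt 1 (M i - (i : ℕ)) with h | h
    · have hv1 : v i = 1 := cl_of_one_le h
      have := hA i h
      rw [hv1]
      exact mul_nonneg (by linarith) (by linarith)
    · rcases le_or_gt (M i - (i : ℕ)) 0 with h' | h'
      · have hv0 : v i = 0 := cl_of_le_zero h'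
        have := hB i h'
        rw [hv0]
        nlinarith
      · have := hC i h' h
        rw [this]
        simp
  -- exact decomposition identity
  have hkey : ∀ w : Fin n → ℝ,
      F w = F v + (2 / n) * (∑ i : Fin n, (v i - w i) * (M i - S))
        + (1 / n) * ((∑ i : Fin n, w i) - S) ^ 2 := by
    intro w
    have hsum : ∑ i : Fin n, (v i - w i) * (M i - S)
        = ((n : ℝ) * Q - S) * (S - ∑ i : Fin n, w i)
          - ((n : ℝ) / 2) * ((∑ i : Fin n, v i * b i) - ∑ i : Fin n, w i * b i) := by
      have hterm : ∀ i : Fin n, (v i - w i) * (M i - S)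
          = ((n : ℝ) * Q - S) * v i - ((n : ℝ) * Q - S) * w i
            - ((n : ℝ) / 2) * (v i * b i) + ((n : ℝ) / 2) * (w i * b i) := by
        intro i
        simp only [hM]
        ring
      rw [Finset.sum_congr rfl fun i _ => hterm i]
      rw [Finset.sum_add_distrib, Finset.sum_sub_distrib, Finset.sum_sub_distrib,
        ← Finset.mul_sum, ← Finset.mul_sum, ← Finset.mul_sum, ← Finset.mul_sum, ← hS]
      ring
    rw [hF w, hF v, hsum, ← hS]
    field_simp
    ring
  have hvmem : v ∈ Set.Icc (0 : Fin n → ℝ) 1 := by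
    constructor
    · intro i; exact cl_nonneg _
    · intro i; exact cl_le_one _
  have hvmin : ∀ w ∈ Set.Icc (0 : Fin n → ℝ) 1, F v ≤ F w := by
    intro w hw
    have hD : 0 ≤ ∑ i : Fin n, (v i - w i) * (M i - S) :=
      Finset.sum_nonneg fun i _ => hsign i (w i) (hw.1 i) (hw.2 i)
    have h1 : 0 ≤ (2 / (n : ℝ)) * (∑ i : Fin n, (v i - w i) * (M i - S)) :=
      mul_nonneg (by positivity) hD
    have h2 : 0 ≤ (1 / (n : ℝ)) * ((∑ i : Fin n, w i) - S) ^ 2 := by positivity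
    rw [hkey w]
    linarith
  refine ⟨v, ⟨hvmem, hvmin⟩, ?_, ?_⟩
  · -- uniqueness
    rintro w ⟨hwmem, hwmin⟩
    have hle : F v ≤ F w := hvmin w hwmem
    have hge : F w ≤ F v := hwmin v hvmem
    have heq : F w = F v := le_antisymm hge hle
    rw [hkey w] at heq
    have hD : 0 ≤ ∑ i : Fin n, (v i - w i) * (M i - S) :=
      Finset.sum_nonneg fun i _ => hsign i (w i) (hwmem.1 i) (hwmem.2 i)
    have hsq : 0 ≤ ((∑ i : Fin n, w i) - S) ^ 2 := sq_nonneg _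
    have ha : 0 ≤ (2 / (n : ℝ)) * (∑ i : Fin n, (v i - w i) * (M i - S)) :=
      mul_nonneg (by positivity) hD
    have hb' : 0 ≤ (1 / (n : ℝ)) * ((∑ i : Fin n, w i) - S) ^ 2 :=
      mul_nonneg (by positivity) hsq
    have hza : (2 / (n : ℝ)) * (∑ i : Fin n, (v i - w i) * (M i - S)) = 0 := by linarith
    have hzb : (1 / (n : ℝ)) * ((∑ i : Fin n, w i) - S) ^ 2 = 0 := by linarith
    have hn2 : (2 / (n : ℝ)) ≠ 0 := by positivity
    have hn1 : (1 / (n : ℝ)) ≠ 0 := by positivity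
    have hD0 : ∑ i : Fin n, (v i - w i) * (M i - S) = 0 :=
      (mul_eq_zero.mp hza).resolve_left hn2
    have hT : (∑ i : Fin n, w i) = S := by
      have : ((∑ i : Fin n, w i) - S) ^ 2 = 0 := (mul_eq_zero.mp hzb).resolve_left hn1
      have := pow_eq_zero_iff (n := 2) (by norm_num) |>.mp this
      linarith
    have hterm : ∀ i ∈ Finset.univ, (v i - w i) * (M i - S) = 0 :=
      (Finset.sum_eq_zero_iff_of_nonneg
        (fun i _ => hsign i (w i) (hwmem.1 i) (hwmem.2 i))).mp hD0
    funext i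
    by_cases hMi : M i = S
    · have hvw : ∀ j : Fin n, j ≠ i → w j = v j := by
        intro j hj
        have hMj : M j ≠ S := by
          rcases lt_or_gt_of_ne hj with h | h
          · have := hMlt h; rw [hMi] at this; linarith
          · have := hMlt h; rw [hMi] at this; linarith
        have h0 := hterm j (Finset.mem_univ j)
        rcases mul_eq_zero.mp h0 with h | h
        · linarith [sub_eq_zero.mp h]
        · exact absurd (by linarith [sub_eq_zero.mp h] : M j = S) hMj
      have e1 : w i + ∑ j ∈ Finset.univ.erase i, w j = ∑ j : Fin n, w j :=
        Finset.add_sum_erase _ _ (Finset.mem_univ i)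
      have e2 : v i + ∑ j ∈ Finset.univ.erase i, v j = ∑ j : Fin n, v j :=
        Finset.add_sum_erase _ _ (Finset.mem_univ i)
      have e3 : ∑ j ∈ Finset.univ.erase i, w j = ∑ j ∈ Finset.univ.erase i, v j :=
        Finset.sum_congr rfl fun j hj => hvw j (Finset.mem_erase.mp hj).1
      have := hT
      rw [← hS] at e2
      linarith
    · have h0 := hterm i (Finset.mem_univ i)
      rcases mul_eq_zero.mp h0 with h | h
      · linarith [sub_eq_zero.mp h]
      · exact absurd (by linarith [sub_eq_zero.mp h] : M i = S) hMi
  · -- characterization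
    intro i
    have hMi : M i = (n : ℝ) * Q - (n : ℝ) * b i / 2 := rfl
    have key1 : ((((i : ℕ) : ℝ) + 1) / (n : ℝ) - Q ≤ -(b i) / 2)
        ↔ 1 ≤ M i - (i : ℕ) := by
      rw [sub_le_iff_le_add, div_le_iff₀ hn', hMi]
      constructor <;> intro h <;> nlinarith
    have key2 : (-(b i) / 2 ≤ ((i : ℕ) : ℝ) / (n : ℝ) - Q)
        ↔ M i - (i : ℕ) ≤ 0 := by
      rw [le_sub_iff_add_le, le_div_iff₀ hn', hMi]
      constructor <;> intro h <;> nlinarith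
    refine ⟨?_, ?_, ?_⟩
    · rw [show v i = cl (M i - (i : ℕ)) from rfl, cl_eq_one_iff, key1]
    · rw [show v i = cl (M i - (i : ℕ)) from rfl, cl_eq_zero_iff, key2]
    · rintro ⟨h1, h2⟩
      have hl : 0 < M i - (i : ℕ) := by
        rw [← not_le, ← key2]; exact not_le.mpr h1
      have hr : M i - (i : ℕ) < 1 := by
        rw [← not_le, ← key1]; exact not_le.mpr h2
      have hv : v i = M i - (i : ℕ) := cl_of_mem hl.le hr.le
      constructor
      · rw [hv, hMi]
      · rw [hv]; exact ⟨hl, hr⟩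
end

section
/- Let (v^k)_{k≥0} in [0,1]^n and (u^k)_{k≥0} in [0,1]^m satisfy, for every k: K(v^{k+1}, u^k) ≤ K(v, u^k) for all v ∈ [0,1]^n, and K(v^{k+1}, u^{k+1}) ≤ K(v^{k+1}, u) for all u ∈ [0,1]^m. If (v^k, u^k) converges to a point (v*, u*), then (v*, u*) ∈ [0,1]^n × [0,1]^m and (v*, u*) is a first-order stationary point of K over [0,1]^n × [0,1]^m: for every (v, u) ∈ [0,1]^n × [0,1]^m, ∇K(v*, u*) · ((v, u) − (v*, u*)) ≥ 0. -/
/-! Since `K` is continuous, the two block-minimality conditions pass to the limit: `v*`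
minimizes `K (·, u*)` and `u*` minimizes `K (v*, ·)` over the box. First-order optimality of
each block over a convex set gives nonnegative partial derivatives in the directions `v - v*`
and `u - u*`, and the full directional derivative is their sum. -/

open Filter Topology

section

variable {E F : Type*} [NormedAddCommGroup E] [NormedSpace ℝ E]
  [NormedAddCommGroup F] [NormedSpace ℝ F]

theorem IsMinOn.hasFDerivAt_nonneg_of_convex {f : E → ℝ} {f' : E →L[ℝ] ℝ} {s : Set E} {a x : E}
    (h : IsMinOn f s a) (hf : HasFDerivAt f f' a) (hs : Convex ℝ s) (ha : a ∈ s) (hx : x ∈ s) :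
    0 ≤ f' (x - a) :=
  h.localize.hasFDerivWithinAt_nonneg hf.hasFDerivWithinAt
    (sub_mem_posTangentConeAt_of_segment_subset (hs.segment_subset ha hx))

theorem fderiv_nonneg_of_isMinOn_fst_of_isMinOn_snd {f : E × F → ℝ} {s : Set E} {t : Set F}
    {a x : E} {b y : F} (hf : DifferentiableAt ℝ f (a, b)) (hs : Convex ℝ s) (ht : Convex ℝ t)
    (hmin₁ : IsMinOn (fun x => f (x, b)) s a) (hmin₂ : IsMinOn (fun y => f (a, y)) t b)
    (ha : a ∈ s) (hb : b ∈ t) (hx : x ∈ s) (hy : y ∈ t) :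
    0 ≤ fderiv ℝ f (a, b) ((x, y) - (a, b)) := by
  have h₁ : HasFDerivAt (fun x => f (x, b)) ((fderiv ℝ f (a, b)).comp (.inl ℝ E F)) a :=
    hf.hasFDerivAt.comp a (hasFDerivAt_prodMk_left a b)
  have h₂ : HasFDerivAt (fun y => f (a, y)) ((fderiv ℝ f (a, b)).comp (.inr ℝ E F)) b :=
    hf.hasFDerivAt.comp b (hasFDerivAt_prodMk_right a b)
  have hsplit : (x, y) - (a, b) = ContinuousLinearMap.inl ℝ E F (x - a) +
      ContinuousLinearMap.inr ℝ E F (y - b) := by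
    ext <;> simp
  rw [hsplit, map_add]
  exact add_nonneg (hmin₁.hasFDerivAt_nonneg_of_convex h₁ hs ha hx)
    (hmin₂.hasFDerivAt_nonneg_of_convex h₂ ht hb hy)

end

section

variable {X Y : Type*} [TopologicalSpace X] [TopologicalSpace Y] {f : X × Y → ℝ}
  {x : ℕ → X} {y : ℕ → Y} {a : X} {b : Y}

theorem isMinOn_fst_of_tendsto (hf : Continuous f) {s : Set X} (hx : Tendsto x atTop (𝓝 a))
    (hy : Tendsto y atTop (𝓝 b)) (hmin : ∀ k, IsMinOn (fun x' => f (x', y k)) s (x k)) :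
    IsMinOn (fun x' => f (x', b)) s a := fun _ hx' =>
  le_of_tendsto_of_tendsto' ((hf.tendsto _).comp (hx.prodMk_nhds hy))
    ((hf.tendsto _).comp (tendsto_const_nhds.prodMk_nhds hy)) fun k => hmin k hx'

theorem isMinOn_snd_of_tendsto (hf : Continuous f) {t : Set Y} (hx : Tendsto x atTop (𝓝 a))
    (hy : Tendsto y atTop (𝓝 b)) (hmin : ∀ k, IsMinOn (fun y' => f (x k, y')) t (y k)) :
    IsMinOn (fun y' => f (a, y')) t b :=
  isMinOn_fst_of_tendsto (hf.comp continuous_swap) hy hx hmin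

end

theorem stmt16_general
    (n m : ℕ)
    (ξ : Fin n → Fin m → ℝ)
    (lam μ : ℝ)
    (K : (Fin n → ℝ) × (Fin m → ℝ) → ℝ)
    (hK : ∀ p : (Fin n → ℝ) × (Fin m → ℝ),
      K p = (1 / ((n : ℝ) * (m : ℝ))) * ∑ i : Fin n, ∑ j : Fin m, p.1 i * p.2 j * ξ i j
        - lam * ((1 / (n : ℝ)) * ∑ i : Fin n, p.1 i + (1 / (m : ℝ)) * ∑ j : Fin m, p.2 j)
        + μ * ((1 / (n : ℝ)) * ∑ i : Fin n, p.1 i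
            - (1 / (m : ℝ)) * ∑ j : Fin m, p.2 j) ^ 2)
    (v : ℕ → Fin n → ℝ) (u : ℕ → Fin m → ℝ)
    (hv : ∀ k, v k ∈ Set.Icc (0 : Fin n → ℝ) 1)
    (hu : ∀ k, u k ∈ Set.Icc (0 : Fin m → ℝ) 1)
    (hminV : ∀ k, ∀ w ∈ Set.Icc (0 : Fin n → ℝ) 1, K (v (k + 1), u k) ≤ K (w, u k))
    (hminU : ∀ k, ∀ w ∈ Set.Icc (0 : Fin m → ℝ) 1,
      K (v (k + 1), u (k + 1)) ≤ K (v (k + 1), w))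
    (vs : Fin n → ℝ) (us : Fin m → ℝ)
    (hconv : Tendsto (fun k => (v k, u k)) atTop (𝓝 (vs, us))) :
    (vs ∈ Set.Icc (0 : Fin n → ℝ) 1 ∧ us ∈ Set.Icc (0 : Fin m → ℝ) 1) ∧
      ∀ w ∈ Set.Icc (0 : Fin n → ℝ) 1, ∀ z ∈ Set.Icc (0 : Fin m → ℝ) 1,
        0 ≤ fderiv ℝ K (vs, us) ((w, z) - (vs, us)) := by
  have hKd : Differentiable ℝ K := by
    rw [show K = _ from funext hK]
    fun_prop
  have hvlim : Tendsto v atTop (𝓝 vs) := (continuous_fst.tendsto _).comp hconv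
  have hulim : Tendsto u atTop (𝓝 us) := (continuous_snd.tendsto _).comp hconv
  have hvs := isClosed_Icc.mem_of_tendsto hvlim (Eventually.of_forall hv)
  have hus := isClosed_Icc.mem_of_tendsto hulim (Eventually.of_forall hu)
  have hv₁ : Tendsto (fun k => v (k + 1)) atTop (𝓝 vs) := hvlim.comp (tendsto_add_atTop_nat 1)
  have hvs_min := isMinOn_fst_of_tendsto hKd.continuous hv₁ hulim hminV
  have hus_min := isMinOn_snd_of_tendsto hKd.continuous hv₁
    (hulim.comp (tendsto_add_atTop_nat 1)) hminU
  exact ⟨⟨hvs, hus⟩, fun w hw z hz => fderiv_nonneg_of_isMinOn_fst_of_isMinOn_snd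
    (hKd _) (convex_Icc _ _) (convex_Icc _ _) hvs_min hus_min hvs hus hw hz⟩

/-- If `(v^k, u^k)` is generated by exact alternating minimization of `K`
over `[0,1]^n × [0,1]^m` and converges to `(v*, u*)`, then `(v*, u*)` lies in the box and
is a first-order stationary point of `K` over the box:
`∇K(v*,u*) · ((v,u) − (v*,u*)) ≥ 0` for all `(v,u)` in the box (the gradient pairing is
expressed via the Fréchet derivative of `K`). -/
theorem stmt16
    (n m : ℕ) (hn : 1 ≤ n) (hm : 1 ≤ m)
    (ξ : Fin n → Fin m → ℝ) (hξ : ∀ i j, 0 ≤ ξ i j)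
    (lam μ : ℝ) (hlam : 0 < lam) (hμ : 0 < μ)
    (K : (Fin n → ℝ) × (Fin m → ℝ) → ℝ)
    (hK : ∀ p : (Fin n → ℝ) × (Fin m → ℝ),
      K p = (1 / ((n : ℝ) * (m : ℝ))) * ∑ i : Fin n, ∑ j : Fin m, p.1 i * p.2 j * ξ i j
        - lam * ((1 / (n : ℝ)) * ∑ i : Fin n, p.1 i + (1 / (m : ℝ)) * ∑ j : Fin m, p.2 j)
        + μ * ((1 / (n : ℝ)) * ∑ i : Fin n, p.1 i
            - (1 / (m : ℝ)) * ∑ j : Fin m, p.2 j) ^ 2)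
    (v : ℕ → Fin n → ℝ) (u : ℕ → Fin m → ℝ)
    (hv : ∀ k, v k ∈ Set.Icc (0 : Fin n → ℝ) 1)
    (hu : ∀ k, u k ∈ Set.Icc (0 : Fin m → ℝ) 1)
    (hminV : ∀ k, ∀ w ∈ Set.Icc (0 : Fin n → ℝ) 1, K (v (k + 1), u k) ≤ K (w, u k))
    (hminU : ∀ k, ∀ w ∈ Set.Icc (0 : Fin m → ℝ) 1,
      K (v (k + 1), u (k + 1)) ≤ K (v (k + 1), w))
    (vs : Fin n → ℝ) (us : Fin m → ℝ)
    (hconv : Tendsto (fun k => (v k, u k)) atTop (𝓝 (vs, us))) :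
    (vs ∈ Set.Icc (0 : Fin n → ℝ) 1 ∧ us ∈ Set.Icc (0 : Fin m → ℝ) 1) ∧
      ∀ w ∈ Set.Icc (0 : Fin n → ℝ) 1, ∀ z ∈ Set.Icc (0 : Fin m → ℝ) 1,
        0 ≤ fderiv ℝ K (vs, us) ((w, z) - (vs, us)) :=
  stmt16_general n m ξ lam μ K hK v u hv hu hminV hminU vs us hconv
end
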